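/- arXiv:1310.1289 — 8 statements merged into one kernel-verified Lean document; each statement's English description precedes it below -/
import Mathlib

section
/- Let K be a δσ-field of characteristic zero and let L|K be a δσ-field extension with L^δ = K^δ =: k. Let a₁,…,aₙ ∈ K∖{0} and z₁,…,zₙ ∈ L∖{0} satisfy δ(z_i) = a_i·z_i for i = 1,…,n. Then z₁,…,zₙ are transformally dependent over K if and only if there exist s ∈ ℕ, integers r_{i,j} ∈ ℤ (1 ≤ i ≤ n, 0 ≤ j ≤ s) not all zero, and a nonzero g ∈ K such that Σ_{i=1}^{n} Σ_{j=0}^{s} r_{i,j}·ℏ_j·σ^j(a_i) = δ(g)/g. -/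
/-!
The elements `w (i, j) = σ^j (z i)` satisfy `δ (w k) = b k * w k` with `b (i, j) = ℏ_j σ^j (a i)`,
so the theorem is the Kolchin–Ostrowski theorem for the family `w`, whose monomials `w^α` have
logarithmic derivative `Σ α k • b k`. If a nonzero polynomial `p` over `K` vanishes at `w`, take
one with the fewest monomials. Differentiating `p(w) = 0` gives a relation with the same
monomials, hence by minimality a multiple `λ • p`; coefficientwise,
`δ c_α / c_α + Σ α k • b k = λ` for every monomial `α` of `p`, and two distinct monomials `α, β`
(a single one cannot vanish at `w`) give `δ g / g = Σ (α k - β k) • b k` for `g = c_β / c_α`.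
Conversely, if `g` satisfies this, then `w^α / (g w^β)` is a constant of `L`, hence some `c ∈ K`,
and `X^α - c g X^β` vanishes at `w`.
-/

open scoped Differential
open MvPolynomial
open Finsupp (linearCombination linearCombination_apply)

/-- `ℏ_j`, the factor in `δ ∘ σ^j = ℏ_j • σ^j ∘ δ`. -/
def hbarSeq {K : Type*} [Field K] (σ : K →+* K) (ℏ : K) : ℕ → K
  | 0 => 1
  | j + 1 => ℏ * σ (hbarSeq σ ℏ j)

lemma Differential.logDeriv_eq_iff {L : Type*} [Field L] [Differential L] {x t : L}
    (hx : x ≠ 0) : logDeriv x = t ↔ x′ = t * x := by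
  rw [logDeriv, div_eq_iff hx]

namespace KolchinOstrowski

variable {K L ι : Type*} [Field K] [Field L] [Algebra K L] {w : ι → L} {b : ι → K}

lemma aeval_monomial_ne_zero (hw0 : ∀ k, w k ≠ 0) (α : ι →₀ ℕ) {c : K} (hc : c ≠ 0) :
    aeval w (monomial α c) ≠ 0 := by
  rw [aeval_monomial, Finsupp.prod]
  exact mul_ne_zero ((map_ne_zero _).mpr hc)
    (Finset.prod_ne_zero_iff.mpr fun k _ => pow_ne_zero _ (hw0 k))

lemma one_lt_card_support_of_aeval_eq_zero (hw0 : ∀ k, w k ≠ 0) {p : MvPolynomial ι K}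
    (hp : p ≠ 0) (hpw : aeval w p = 0) : 1 < p.support.card := by
  by_contra! h
  obtain ⟨α, hα⟩ := Finset.card_le_one_iff_subset_singleton.mp h
  have hmono : p = monomial α (p.coeff α) :=
    eq_monomial_of_support_subset_singleton fun β hβ => Finset.mem_singleton.mp (hα hβ)
  have hc : p.coeff α ≠ 0 := fun h0 => hp (by rw [hmono, h0, monomial_zero])
  exact aeval_monomial_ne_zero hw0 α hc (hmono ▸ hpw)

lemma smul_eq_smul_of_minimal_support {p q : MvPolynomial ι K} (hp : aeval w p = 0)
    (hmin : ∀ r : MvPolynomial ι K, aeval w r = 0 → r ≠ 0 → p.support.card ≤ r.support.card)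
    (hq : aeval w q = 0) (hqp : q.support ⊆ p.support) {α : ι →₀ ℕ} (hα : α ∈ p.support) :
    p.coeff α • q = q.coeff α • p := by
  classical
  by_contra hne
  set r := p.coeff α • q - q.coeff α • p
  have hr : aeval w r = 0 := by simp only [r, map_sub, map_smul, hp, hq, smul_zero, sub_zero]
  have hrp : r.support ⊆ p.support.erase α := by
    intro β hβ
    rw [mem_support_iff, coeff_sub, coeff_smul, coeff_smul, smul_eq_mul, smul_eq_mul] at hβ
    refine Finset.mem_erase.mpr ⟨fun h => hβ (by rw [h, mul_comm, sub_self]), ?_⟩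
    by_contra hβp
    rw [notMem_support_iff.mp hβp, notMem_support_iff.mp fun h => hβp (hqp h)] at hβ
    simp at hβ
  have hcard := (hmin r hr (sub_ne_zero.mpr hne)).trans (Finset.card_le_card hrp)
  rw [Finset.card_erase_of_mem hα] at hcard
  have hpos := Finset.card_pos.mpr ⟨α, hα⟩
  omega

section Differential

variable [Differential L]

lemma logDeriv_aeval_monomial_one (hw0 : ∀ k, w k ≠ 0)
    (hw : ∀ k, (w k)′ = algebraMap K L (b k) * w k) (α : ι →₀ ℕ) :
    Differential.logDeriv (aeval w (monomial α (1 : K))) =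
      algebraMap K L (linearCombination ℕ b α) := by
  rw [aeval_monomial, map_one, one_mul, Finsupp.prod,
    Differential.logDeriv_prod _ _ _ fun k _ => pow_ne_zero _ (hw0 k), linearCombination_apply,
    Finsupp.sum, map_sum]
  refine Finset.sum_congr rfl fun k _ => ?_
  rw [Differential.logDeriv_pow, (Differential.logDeriv_eq_iff (hw0 k)).mpr (hw k),
    nsmul_eq_mul, map_mul, map_natCast]

lemma deriv_aeval_monomial_one (hw0 : ∀ k, w k ≠ 0)
    (hw : ∀ k, (w k)′ = algebraMap K L (b k) * w k) (α : ι →₀ ℕ) :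
    (aeval w (monomial α (1 : K)))′ =
      algebraMap K L (linearCombination ℕ b α) * aeval w (monomial α (1 : K)) :=
  (Differential.logDeriv_eq_iff (aeval_monomial_ne_zero hw0 α one_ne_zero)).mp
    (logDeriv_aeval_monomial_one hw0 hw α)

variable [Differential K]

variable (b) in
noncomputable def twistedDeriv (p : MvPolynomial ι K) : MvPolynomial ι K :=
  ∑ α ∈ p.support, monomial α ((p.coeff α)′ + p.coeff α * linearCombination ℕ b α)

lemma coeff_twistedDeriv (p : MvPolynomial ι K) (α : ι →₀ ℕ) :
    (twistedDeriv b p).coeff α = (p.coeff α)′ + p.coeff α * linearCombination ℕ b α := by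
  classical
  rw [twistedDeriv, coeff_sum]
  simp only [coeff_monomial]
  rw [Finset.sum_ite_eq']
  split_ifs with h
  · rfl
  · rw [notMem_support_iff.mp h, map_zero, zero_mul, add_zero]

lemma support_twistedDeriv_subset (p : MvPolynomial ι K) :
    (twistedDeriv b p).support ⊆ p.support := by
  intro α hα
  rw [mem_support_iff, coeff_twistedDeriv] at hα
  rw [mem_support_iff]
  rintro h
  simp [h] at hα

variable [DifferentialAlgebra K L]

lemma aeval_twistedDeriv (hw0 : ∀ k, w k ≠ 0)
    (hw : ∀ k, (w k)′ = algebraMap K L (b k) * w k) (p : MvPolynomial ι K) :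
    aeval w (twistedDeriv b p) = (aeval w p)′ := by
  conv_rhs => rw [p.as_sum]
  simp only [twistedDeriv, map_sum]
  refine Finset.sum_congr rfl fun α _ => ?_
  rw [← mul_one (p.coeff α), ← C_mul_monomial, ← mul_one (_ + _), ← C_mul_monomial]
  simp only [map_mul, aeval_C, Derivation.leibniz, deriv_aeval_monomial_one hw0 hw,
    ← deriv_algebraMap, map_add, smul_eq_mul, map_one, Derivation.map_one_eq_zero, map_zero]
  ring

theorem exists_logDeriv_eq_of_not_algebraicIndependent (hw0 : ∀ k, w k ≠ 0)
    (hw : ∀ k, (w k)′ = algebraMap K L (b k) * w k) (hdep : ¬AlgebraicIndependent K w) :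
    ∃ g : K, g ≠ 0 ∧ ∃ α β : ι →₀ ℕ, α ≠ β ∧
      linearCombination ℕ b α - linearCombination ℕ b β = Differential.logDeriv g := by
  obtain ⟨p, ⟨hpw, hp⟩, hmin⟩ := (measure fun p : MvPolynomial ι K => p.support.card).wf.has_min
    {p | aeval w p = 0 ∧ p ≠ 0} (by simpa [algebraicIndependent_iff, Set.Nonempty] using hdep)
  obtain ⟨α, hα, β, hβ, hαβ⟩ :=
    Finset.one_lt_card.mp (one_lt_card_support_of_aeval_eq_zero hw0 hp hpw)
  have hprop := smul_eq_smul_of_minimal_support hpw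
    (fun r hr hr0 => not_lt.mp (hmin r ⟨hr, hr0⟩))
    (by rw [aeval_twistedDeriv hw0 hw, hpw, map_zero]) (support_twistedDeriv_subset p) hα
  have key : ∀ γ ∈ p.support, Differential.logDeriv (p.coeff γ) + linearCombination ℕ b γ =
      (twistedDeriv b p).coeff α / p.coeff α := by
    intro γ hγ
    have h := congrArg (coeff γ) hprop
    rw [coeff_smul, coeff_smul, smul_eq_mul, smul_eq_mul, coeff_twistedDeriv] at h
    rw [mem_support_iff] at hα hγ
    rw [Differential.logDeriv]
    field_simp
    linear_combination h
  refine ⟨p.coeff β / p.coeff α, div_ne_zero (mem_support_iff.mp hβ) (mem_support_iff.mp hα),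
    α, β, hαβ, ?_⟩
  rw [Differential.logDeriv_div _ _ (mem_support_iff.mp hβ) (mem_support_iff.mp hα)]
  linear_combination key α hα - key β hβ

theorem not_algebraicIndependent_of_logDeriv_eq [Differential.ContainConstants K L]
    (hw0 : ∀ k, w k ≠ 0) (hw : ∀ k, (w k)′ = algebraMap K L (b k) * w k) {g : K} (hg : g ≠ 0)
    {α β : ι →₀ ℕ} (hαβ : α ≠ β)
    (h : linearCombination ℕ b α - linearCombination ℕ b β = Differential.logDeriv g) :
    ¬AlgebraicIndependent K w := by
  classical
  set wα := aeval w (monomial α (1 : K))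
  set y := algebraMap K L g * aeval w (monomial β (1 : K))
  have hwα : wα ≠ 0 := aeval_monomial_ne_zero hw0 α one_ne_zero
  have hy : y ≠ 0 := mul_ne_zero ((map_ne_zero _).mpr hg) (aeval_monomial_ne_zero hw0 β one_ne_zero)
  have hconst : (wα / y)′ = 0 := by
    rw [← Differential.logDeriv_eq_zero, Differential.logDeriv_div _ _ hwα hy,
      Differential.logDeriv_mul _ _ ((map_ne_zero _).mpr hg)
        (aeval_monomial_ne_zero hw0 β one_ne_zero),
      Differential.logDeriv_algebraMap, logDeriv_aeval_monomial_one hw0 hw,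
      logDeriv_aeval_monomial_one hw0 hw, ← h, map_sub]
    ring
  obtain ⟨c, hc⟩ := mem_range_of_deriv_eq_zero K hconst
  have hwαy : wα = algebraMap K L c * y := by rw [hc, div_mul_cancel₀ _ hy]
  rw [algebraicIndependent_iff]
  intro hind
  have hzero := hind (monomial α 1 - monomial β (c * g)) <| by
    rw [map_sub, ← mul_one (c * g), ← C_mul_monomial, map_mul, aeval_C, map_mul]
    linear_combination hwαy
  have := congrArg (coeff α) hzero
  rw [coeff_sub, coeff_monomial, coeff_monomial, if_pos rfl, if_neg hαβ.symm, coeff_zero] at this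
  simp at this

theorem not_algebraicIndependent_iff_exists_logDeriv_eq [Differential.ContainConstants K L]
    (hw0 : ∀ k, w k ≠ 0) (hw : ∀ k, (w k)′ = algebraMap K L (b k) * w k) :
    ¬AlgebraicIndependent K w ↔ ∃ g : K, g ≠ 0 ∧ ∃ α β : ι →₀ ℕ, α ≠ β ∧
      linearCombination ℕ b α - linearCombination ℕ b β = Differential.logDeriv g :=
  ⟨exists_logDeriv_eq_of_not_algebraicIndependent hw0 hw,
    fun ⟨_, hg, _, _, hαβ, h⟩ => not_algebraicIndependent_of_logDeriv_eq hw0 hw hg hαβ h⟩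

end Differential

end KolchinOstrowski

section IntegerCoefficients

open Finset

variable {M : Type*} [AddCommGroup M]

lemma linearCombination_nat_eq_sum {ι : Type*} (b : ι → M) {α : ι →₀ ℕ} {S : Finset ι}
    (h : α.support ⊆ S) : linearCombination ℕ b α = ∑ k ∈ S, α k • b k :=
  Finsupp.linearCombination_apply_of_mem_supported ℕ ((Finsupp.mem_supported ℕ α).mpr h)

theorem exists_ne_sub_linearCombination_iff {n : ℕ} (b : Fin n × ℕ → M) (x : M) :
    (∃ α β : Fin n × ℕ →₀ ℕ, α ≠ β ∧ linearCombination ℕ b α - linearCombination ℕ b β = x) ↔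
      ∃ (s : ℕ) (r : Fin n → ℕ → ℤ), (∃ i, ∃ j ≤ s, r i j ≠ 0) ∧
        ∑ i, ∑ j ∈ range (s + 1), r i j • b (i, j) = x := by
  have mem_box {s : ℕ} {k : Fin n × ℕ} (hk : k.2 ≤ s) : k ∈ univ ×ˢ range (s + 1) :=
    mem_product.mpr ⟨mem_univ _, mem_range.mpr (Nat.lt_succ_of_le hk)⟩
  constructor
  · rintro ⟨α, β, hαβ, rfl⟩
    set s := (α.support ∪ β.support).sup Prod.snd
    have hbox : α.support ∪ β.support ⊆ univ ×ˢ range (s + 1) := fun k hk => mem_box (le_sup hk)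
    refine ⟨s, fun i j => α (i, j) - β (i, j), ?_, ?_⟩
    · obtain ⟨k, hk⟩ := DFunLike.ne_iff.mp hαβ
      have hkαβ : k ∈ α.support ∪ β.support := by
        contrapose! hk
        simp_all
      exact ⟨k.1, k.2, le_sup hkαβ, by simpa [sub_eq_zero] using hk⟩
    · rw [← sum_product (univ : Finset (Fin n)) (range (s + 1)) fun k => ((α k : ℤ) - β k) • b k,
        linearCombination_nat_eq_sum b (subset_union_left.trans hbox),
        linearCombination_nat_eq_sum b (subset_union_right.trans hbox), ← sum_sub_distrib]
      simp only [sub_smul, natCast_zsmul]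
  · rintro ⟨s, r, ⟨i, j, hj, hr⟩, rfl⟩
    classical
    set S : Finset (Fin n × ℕ) := univ ×ˢ range (s + 1)
    refine ⟨Finsupp.indicator S fun k _ => (r k.1 k.2).toNat,
      Finsupp.indicator S fun k _ => (-r k.1 k.2).toNat, fun h => ?_, ?_⟩
    · have := DFunLike.congr_fun h (i, j)
      rw [Finsupp.indicator_of_mem (mem_box (k := (i, j)) hj),
        Finsupp.indicator_of_mem (mem_box (k := (i, j)) hj)] at this
      dsimp only at this
      omega
    · rw [linearCombination_nat_eq_sum b (Finsupp.support_indicator_subset _ _),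
        linearCombination_nat_eq_sum b (Finsupp.support_indicator_subset _ _), ← sum_sub_distrib,
        sum_product]
      refine sum_congr rfl fun i _ => sum_congr rfl fun j hj => ?_
      simp only [Finsupp.indicator_apply, S, mem_product, mem_univ, hj, and_self, dif_pos,
        ← natCast_zsmul, ← sub_smul, Int.toNat_sub_toNat_neg]

end IntegerCoefficients

def derivationOfLeibniz {R : Type*} [CommRing R] (d : R → R) (hadd : ∀ a b, d (a + b) = d a + d b)
    (hmul : ∀ a b, d (a * b) = a * d b + d a * b) : Derivation ℤ R R :=
  Derivation.mk' (AddMonoidHom.mk' d hadd).toIntLinearMap fun a b => by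
    simp only [AddMonoidHom.coe_toIntLinearMap, AddMonoidHom.mk'_apply, hmul, smul_eq_mul]
    ring

def derivationOfInjective {R S : Type*} [CommRing R] [CommRing S] (D : Derivation ℤ S S)
    (f : R →+* S) (hf : Function.Injective f) (d : R → R) (hd : ∀ a, D (f a) = f (d a)) :
    Derivation ℤ R R :=
  derivationOfLeibniz d
    (fun a b => hf <| by rw [map_add, ← hd, ← hd, ← hd, map_add, map_add])
    (fun a b => hf <| by
      rw [map_add, map_mul, map_mul, ← hd, ← hd, ← hd, map_mul, Derivation.leibniz, smul_eq_mul,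
        smul_eq_mul]
      ring)

lemma deriv_iterate_eq_of_deriv_eq {K L : Type*} [Field K] [Field L] [Algebra K L]
    (δL : L → L) (σK : K →+* K) (σL : L →+* L) (ℏ : K)
    (hσcompat : ∀ a : K, σL (algebraMap K L a) = algebraMap K L (σK a))
    (hcomm : ∀ r : L, δL (σL r) = algebraMap K L ℏ * σL (δL r)) {a : K} {z : L}
    (hz : δL z = algebraMap K L a * z) (j : ℕ) :
    δL ((⇑σL)^[j] z) = algebraMap K L (hbarSeq σK ℏ j * (⇑σK)^[j] a) * (⇑σL)^[j] z := by
  induction j with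
  | zero => simpa [hbarSeq] using hz
  | succ j ih =>
    rw [Function.iterate_succ_apply', hcomm, ih, map_mul, hσcompat, Function.iterate_succ_apply',
      hbarSeq]
    simp only [map_mul]
    ring

theorem stmt_1_general {K L : Type*} [Field K] [Field L] [Algebra K L]
    (δK : K → K) (σK : K →+* K) (δL : L → L) (σL : L →+* L) (ℏ : K)
    (hδLadd : ∀ a b : L, δL (a + b) = δL a + δL b)
    (hδLmul : ∀ a b : L, δL (a * b) = a * δL b + δL a * b)
    (hδcompat : ∀ a : K, δL (algebraMap K L a) = algebraMap K L (δK a))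
    (hσcompat : ∀ a : K, σL (algebraMap K L a) = algebraMap K L (σK a))
    (hcomm : ∀ r : L, δL (σL r) = algebraMap K L ℏ * σL (δL r))
    (hconst : ∀ x : L, δL x = 0 → ∃ c : K, δK c = 0 ∧ x = algebraMap K L c)
    (n : ℕ) (a : Fin n → K) (z : Fin n → L)
    (hz0 : ∀ i, z i ≠ 0)
    (hz : ∀ i, δL (z i) = algebraMap K L (a i) * z i) :
    (¬ AlgebraicIndependent K fun p : Fin n × ℕ => (⇑σL)^[p.2] (z p.1)) ↔
      ∃ (s : ℕ) (r : Fin n → ℕ → ℤ) (g : K),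
        (∃ i, ∃ j ≤ s, r i j ≠ 0) ∧ g ≠ 0 ∧
        ∑ i : Fin n, ∑ j ∈ Finset.range (s + 1),
          (r i j : K) * hbarSeq σK ℏ j * (⇑σK)^[j] (a i) = δK g / g := by
  let : Differential L := ⟨derivationOfLeibniz δL hδLadd hδLmul⟩
  let : Differential K :=
    ⟨derivationOfInjective Differential.deriv (algebraMap K L) (algebraMap K L).injective δK
      hδcompat⟩
  have : DifferentialAlgebra K L := ⟨hδcompat⟩
  have : Differential.ContainConstants K L :=
    ⟨fun {x} hx => let ⟨c, _, hc⟩ := hconst x hx; ⟨c, hc.symm⟩⟩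
  have hw0 (k : Fin n × ℕ) : (⇑σL)^[k.2] (z k.1) ≠ 0 := fun h =>
    hz0 k.1 (σL.injective.iterate k.2 (h.trans (iterate_map_zero σL k.2).symm))
  have hw (k : Fin n × ℕ) : ((⇑σL)^[k.2] (z k.1))′ =
      algebraMap K L (hbarSeq σK ℏ k.2 * (⇑σK)^[k.2] (a k.1)) * (⇑σL)^[k.2] (z k.1) :=
    deriv_iterate_eq_of_deriv_eq δL σK σL ℏ hσcompat hcomm (hz k.1) k.2
  rw [KolchinOstrowski.not_algebraicIndependent_iff_exists_logDeriv_eq hw0 hw]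
  simp only [exists_ne_sub_linearCombination_iff, zsmul_eq_mul, mul_assoc]
  exact ⟨fun ⟨g, hg, s, r, hr, h⟩ => ⟨s, r, g, hr, hg, h⟩,
    fun ⟨s, r, g, hr, hg, h⟩ => ⟨g, hg, s, r, hr, h⟩⟩

/-- σ-analogue of Kolchin's theorem.  For nonzero solutions of
`δ(z i) = a i · z i` in a δσ-field extension `L|K` with `L^δ = K^δ`, the `z i` are
transformally dependent over `K` iff some nontrivial integer linear combination
`Σ r_{i,j}·ℏ_j·σ^j(a i)` is a logarithmic derivative `δ(g)/g` with `g ∈ K∖{0}`. -/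
theorem stmt_1 {K L : Type*} [Field K] [Field L] [Algebra K L] [CharZero K]
    (δK : K → K) (σK : K →+* K) (δL : L → L) (σL : L →+* L) (ℏ : K)
    (hδLadd : ∀ a b : L, δL (a + b) = δL a + δL b)
    (hδLmul : ∀ a b : L, δL (a * b) = a * δL b + δL a * b)
    (hδcompat : ∀ a : K, δL (algebraMap K L a) = algebraMap K L (δK a))
    (hσcompat : ∀ a : K, σL (algebraMap K L a) = algebraMap K L (σK a))
    (hℏ0 : ℏ ≠ 0) (hδℏ : δK ℏ = 0)
    (hcomm : ∀ r : L, δL (σL r) = algebraMap K L ℏ * σL (δL r))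
    (hconst : ∀ x : L, δL x = 0 → ∃ c : K, δK c = 0 ∧ x = algebraMap K L c)
    (n : ℕ) (a : Fin n → K) (z : Fin n → L)
    (ha : ∀ i, a i ≠ 0) (hz0 : ∀ i, z i ≠ 0)
    (hz : ∀ i, δL (z i) = algebraMap K L (a i) * z i) :
    (¬ AlgebraicIndependent K fun p : Fin n × ℕ => (⇑σL)^[p.2] (z p.1)) ↔
      ∃ (s : ℕ) (r : Fin n → ℕ → ℤ) (g : K),
        (∃ i, ∃ j ≤ s, r i j ≠ 0) ∧ g ≠ 0 ∧
        ∑ i : Fin n, ∑ j ∈ Finset.range (s + 1),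
          (r i j : K) * hbarSeq σK ℏ j * (⇑σK)^[j] (a i) = δK g / g :=
  stmt_1_general δK σK δL σL ℏ hδLadd hδLmul hδcompat hσcompat hcomm hconst n a z hz0 hz
end

section
/- Let L|K be an extension of fields of characteristic zero equipped with a derivation δ on L that maps K into K. Let a, b, c ∈ K and v ∈ L with δ(v) = a·v. If the equation δ(y) − c·y = b has a solution in the intermediate field K(v) generated by v over K, then it already has a solution in K. -/
/-!
Write `D_w` for the derivation of `K[X]` that extends `δ` and sends `X` to `w`, so that
`δ (r(x)) = (D_w r)(x)` whenever `δ x = w(x)`; for `deg w ≤ 1` it does not raise degrees.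

If `v` is algebraic, so is the solution `y ∈ K(v)`. Its minimal polynomial `f` divides
`D_{cX+b} f`, hence `D_{cX+b} f = e f`, and comparing the two top coefficients (`f` monic of
degree `n`) shows that `-f_{n-1}/n` solves the equation.

If `v` is transcendental, write `y = p(v)/q(v)` with `p, q` coprime and `D = D_{aX}`. The equation
becomes `D p · q = p · D q + (c p + b q) q`, so `q ∣ D q`, i.e. `D q = e q` and then
`D p = (e + c) p + b q`. As `D` acts on each coefficient separately, comparing coefficients of
degree `n = deg q` shows that `p_n / q_n` solves the equation.
-/

open Polynomial Differential IntermediateField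

def Derivation.mkOfLeibniz {R : Type*} [CommRing R] (δ : R → R)
    (hadd : ∀ u v, δ (u + v) = δ u + δ v) (hmul : ∀ u v, δ (u * v) = u * δ v + δ u * v) :
    Derivation ℤ R R :=
  Derivation.mk' (AddMonoidHom.mk' δ hadd).toIntLinearMap fun u v => by
    simp [hmul, mul_comm]

lemma Polynomial.exists_eq_C_mul_of_dvd_of_natDegree_le {R : Type*} [CommRing R] [IsDomain R]
    {f g : R[X]} (hf : f ≠ 0) (hfg : f ∣ g) (hdeg : g.natDegree ≤ f.natDegree) :
    ∃ e : R, g = C e * f := by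
  obtain ⟨t, rfl⟩ := hfg
  rcases eq_or_ne t 0 with rfl | ht
  · exact ⟨0, by simp⟩
  rw [natDegree_mul hf ht] at hdeg
  exact ⟨t.coeff 0, by rw [mul_comm, ← eq_C_of_natDegree_eq_zero (by omega)]⟩

lemma IntermediateField.exists_isCoprime_of_mem_adjoin_simple {K L : Type*} [Field K] [Field L]
    [Algebra K L] {v y : L} (hv : Transcendental K v) (hy : y ∈ K⟮v⟯) :
    ∃ p q : K[X], IsCoprime p q ∧ q ≠ 0 ∧ y * aeval v q = aeval v p := by
  classical
  have hinj := transcendental_iff_injective.1 hv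
  obtain ⟨r, s, rfl⟩ := (mem_adjoin_simple_iff K y).1 hy
  rcases eq_or_ne s 0 with rfl | hs
  · exact ⟨0, 1, isCoprime_zero_left.2 isUnit_one, one_ne_zero, by simp⟩
  set g := gcd r s
  have hg : g ≠ 0 := gcd_ne_zero_of_right hs
  have hq : s / g ≠ 0 := right_div_gcd_ne_zero hs
  refine ⟨r / g, s / g, isCoprime_div_gcd_div_gcd hs, hq, ?_⟩
  have hgv : aeval v g ≠ 0 := (map_ne_zero_iff _ hinj).2 hg
  have hqv : aeval v (s / g) ≠ 0 := (map_ne_zero_iff _ hinj).2 hq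
  have hfactor (t : K[X]) (ht : g ∣ t) : aeval v t = aeval v g * aeval v (t / g) := by
    rw [← map_mul, EuclideanDomain.mul_div_cancel' hg ht]
  rw [hfactor r (gcd_dvd_left r s), hfactor s (gcd_dvd_right r s), mul_div_mul_left _ _ hgv,
    div_mul_cancel₀ _ hqv]

lemma IntermediateField.isAlgebraic_of_mem_adjoin_simple {K L : Type*} [Field K] [Field L]
    [Algebra K L] {v y : L} (hv : IsAlgebraic K v) (hy : y ∈ K⟮v⟯) : IsAlgebraic K y :=
  ((isAlgebraic_adjoin_simple hv.isIntegral).isAlgebraic ⟨y, hy⟩).algHom K⟮v⟯.val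

namespace Differential

section CommRing

variable {R : Type*} [CommRing R] [Differential R] {w : R[X]}

lemma coeff_implicitDeriv_of_natDegree_le_one (hw : w.natDegree ≤ 1) (r : R[X]) (i : ℕ) :
    (implicitDeriv w r).coeff i =
      (r.coeff i)′ + w.coeff 1 * i * r.coeff i + w.coeff 0 * (i + 1) * r.coeff (i + 1) := by
  rw [eq_X_add_C_of_natDegree_le_one hw]
  rcases i with _ | i <;>
    simp [implicitDeriv, coeff_derivative, add_mul, mul_assoc, coeff_C_mul, coeff_X_mul]
  ring

lemma natDegree_implicitDeriv_le (hw : w.natDegree ≤ 1) (r : R[X]) :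
    (implicitDeriv w r).natDegree ≤ r.natDegree := by
  refine natDegree_le_iff_coeff_eq_zero.2 fun i hi => ?_
  rw [coeff_implicitDeriv_of_natDegree_le_one hw, coeff_eq_zero_of_natDegree_lt hi,
    coeff_eq_zero_of_natDegree_lt (hi.trans i.lt_succ_self)]
  simp

end CommRing

variable {K L : Type*} [Field K] [Differential K]

theorem exists_deriv_sub_mul_eq_of_monic [CharZero K] {b c e : K} {f : K[X]} (hf : f.Monic)
    (hdeg : 0 < f.natDegree) (he : implicitDeriv (C c * X + C b) f = C e * f) :
    ∃ z : K, z′ - c * z = b := by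
  obtain ⟨m, hm⟩ : ∃ m, f.natDegree = m + 1 := ⟨_, (Nat.succ_pred_eq_of_pos hdeg).symm⟩
  have hw : (C c * X + C b).natDegree ≤ 1 := natDegree_linear_le
  have hlead : f.coeff (m + 1) = 1 := by rw [← hm]; exact hf.coeff_natDegree
  have hnext : f.coeff (m + 1 + 1) = 0 := coeff_eq_zero_of_natDegree_lt (by omega)
  have htop := congrArg (coeff · (m + 1)) he
  have hsub := congrArg (coeff · m) he
  simp only [coeff_implicitDeriv_of_natDegree_le_one hw, coeff_add, coeff_C_mul, coeff_mul_X,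
    coeff_C_zero, coeff_C_succ, mul_coeff_zero, coeff_X_zero, hlead, hnext,
    Derivation.map_one_eq_zero, Nat.cast_add, Nat.cast_one, add_zero, zero_add, mul_one,
    mul_zero] at htop hsub
  have hm1 : (m + 1 : K) ≠ 0 := Nat.cast_add_one_ne_zero m
  refine ⟨-f.coeff m / (m + 1), ?_⟩
  rw [Derivation.leibniz_div_const _ _ _ (by simp), map_neg, smul_eq_mul]
  field_simp
  linear_combination f.coeff m * htop - hsub

theorem exists_deriv_sub_mul_eq_of_implicitDeriv_eq {a b c e : K} {p q : K[X]} (hq : q ≠ 0)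
    (hDq : implicitDeriv (C a * X) q = C e * q)
    (hDp : implicitDeriv (C a * X) p = C (e + c) * p + C b * q) :
    ∃ z : K, z′ - c * z = b := by
  have hw : (C a * X).natDegree ≤ 1 := (natDegree_C_mul_le a X).trans natDegree_X_le
  set n := q.natDegree
  have hl : q.coeff n ≠ 0 := leadingCoeff_ne_zero.2 hq
  have hq_n := congrArg (coeff · n) hDq
  have hp_n := congrArg (coeff · n) hDp
  simp only [coeff_implicitDeriv_of_natDegree_le_one hw, coeff_add, coeff_C_mul, coeff_mul_X,
    coeff_C_zero, mul_coeff_zero, coeff_X_zero, mul_zero, zero_mul, add_zero] at hq_n hp_n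
  refine ⟨p.coeff n / q.coeff n, ?_⟩
  rw [Derivation.leibniz_div, smul_eq_mul, smul_eq_mul, smul_eq_mul]
  field_simp
  linear_combination q.coeff n * hp_n - p.coeff n * hq_n

variable [Field L] [Differential L] [Algebra K L] [DifferentialAlgebra K L]

theorem exists_deriv_sub_mul_eq_of_isAlgebraic [CharZero K] {b c : K} {y : L}
    (hy : IsAlgebraic K y) (hsol : y′ = algebraMap K L c * y + algebraMap K L b) :
    ∃ z : K, z′ - c * z = b := by
  have hint := hy.isIntegral
  have hdvd : minpoly K y ∣ implicitDeriv (C c * X + C b) (minpoly K y) := minpoly.dvd K y (by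
    rw [← deriv_aeval_eq_implicitDeriv y _ (by simp [hsol]), minpoly.aeval, map_zero])
  obtain ⟨e, he⟩ := exists_eq_C_mul_of_dvd_of_natDegree_le (minpoly.ne_zero hint) hdvd
    (natDegree_implicitDeriv_le natDegree_linear_le _)
  exact exists_deriv_sub_mul_eq_of_monic (minpoly.monic hint) (minpoly.natDegree_pos hint) he

theorem exists_deriv_sub_mul_eq_of_transcendental {a b c : K} {v y : L} (hv : Transcendental K v)
    (hva : v′ = algebraMap K L a * v) (hy : y ∈ K⟮v⟯)
    (hsol : y′ = algebraMap K L c * y + algebraMap K L b) :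
    ∃ z : K, z′ - c * z = b := by
  obtain ⟨p, q, hpq, hq, hyq⟩ := exists_isCoprime_of_mem_adjoin_simple hv hy
  set D := implicitDeriv (C a * X)
  have hD (r : K[X]) : (aeval v r)′ = aeval v (D r) :=
    deriv_aeval_eq_implicitDeriv v _ (by simp [hva]) r
  have hpoly : D p * q = p * D q + (C c * p + C b * q) * q := by
    apply transcendental_iff_injective.1 hv
    simp only [map_mul, map_add, aeval_C, ← hD, ← hyq, Derivation.leibniz, hsol, smul_eq_mul]
    ring
  have hdvd : q ∣ D q :=
    hpq.symm.dvd_of_dvd_mul_left ⟨D p - C c * p - C b * q, by linear_combination -hpoly⟩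
  obtain ⟨e, he⟩ := exists_eq_C_mul_of_dvd_of_natDegree_le hq hdvd
    (natDegree_implicitDeriv_le ((natDegree_C_mul_le a X).trans natDegree_X_le) _)
  have hDp : D p = C (e + c) * p + C b * q :=
    mul_right_cancel₀ hq (by rw [C_add]; linear_combination hpoly + p * he)
  exact exists_deriv_sub_mul_eq_of_implicitDeriv_eq hq he hDp

theorem exists_deriv_sub_mul_eq_of_mem_adjoin_simple [CharZero K] {a b c : K} {v y : L}
    (hva : v′ = algebraMap K L a * v) (hy : y ∈ K⟮v⟯)
    (hsol : y′ - algebraMap K L c * y = algebraMap K L b) :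
    ∃ z : K, z′ - c * z = b := by
  rw [sub_eq_iff_eq_add'] at hsol
  by_cases hv : IsAlgebraic K v
  · exact exists_deriv_sub_mul_eq_of_isAlgebraic (isAlgebraic_of_mem_adjoin_simple hv hy) hsol
  · exact exists_deriv_sub_mul_eq_of_transcendental hv hva hy hsol

end Differential

/-- rational descent of solutions of `δ(y) − c·y = b`.  Let `L|K` be an
extension of fields of characteristic zero with a derivation `δL` on `L` mapping `K`
into `K` (via `δK`), and let `v ∈ L` satisfy `δ(v) = a·v` with `a ∈ K`.  If
`δ(y) − c·y = b` (with `b, c ∈ K`) has a solution in the intermediate field `K(v)`,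
then it has a solution in `K`. -/
theorem stmt_5 {K L : Type*} [Field K] [Field L] [Algebra K L] [CharZero K]
    (δK : K → K) (δL : L → L)
    (hδLadd : ∀ u v : L, δL (u + v) = δL u + δL v)
    (hδLmul : ∀ u v : L, δL (u * v) = u * δL v + δL u * v)
    (hδcompat : ∀ x : K, δL (algebraMap K L x) = algebraMap K L (δK x))
    (a b c : K) (v : L)
    (hv : δL v = algebraMap K L a * v)
    (hsol : ∃ y ∈ IntermediateField.adjoin K {v},
      δL y - algebraMap K L c * y = algebraMap K L b) :
    ∃ y : K, δK y - c * y = b := by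
  have hinj := (algebraMap K L).injective
  let : Differential L := ⟨.mkOfLeibniz δL hδLadd hδLmul⟩
  let : Differential K := ⟨.mkOfLeibniz δK
    (fun x y => hinj (by simp only [map_add, ← hδcompat, hδLadd]))
    (fun x y => hinj (by simp only [map_add, map_mul, ← hδcompat, hδLmul]))⟩
  have : DifferentialAlgebra K L := ⟨hδcompat⟩
  obtain ⟨y, hy, hy_sol⟩ := hsol
  exact exists_deriv_sub_mul_eq_of_mem_adjoin_simple hv hy hy_sol
end

section
/- Let K be a δσ-field of characteristic zero, n ≥ 1, A ∈ K^{n×n} and d ≥ 1, and suppose B ∈ GLₙ(K) satisfies the integrability condition δ(B) + B·A = ℏ_d·σ^d(A)·B (with δ and σ applied entrywise). Let L be a δσ-field extension of K with L^δ = K^δ =: k which contains a fundamental solution matrix Y ∈ GLₙ(L) with δ(Y) = A·Y (for instance, a σ-Picard–Vessiot extension of K for δ(y) = Ay). If k is linearly σ^d-closed, i.e. for every m ≥ 1 and every C ∈ GLₘ(k) there exists D ∈ GLₘ(k) with σ^d(D) = C·D, then there exists Z ∈ GLₙ(L) with δ(Z) = A·Z and σ^d(Z) = B·Z. -/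
/-!
Write `τ = σ^d` and `c = ℏ_d`, so that `δ ∘ τ = c · τ ∘ δ`. The matrix `S = τ(Y)` satisfies
`δ(S) = P S` with `P = c · τ(A)`, while the integrability condition reads `δ(B) = P B - B A`.
Hence `C = S⁻¹ B Y` satisfies `S δ(C) = δ(B Y) - δ(S) C = 0`, so `C` has constant entries and,
as `L^δ = K^δ`, is defined over `k`. Linear `τ`-closedness of `k` gives a constant `D` with
`τ(D) = C D`, and `Z = Y D` then solves `δ(Z) = A Z` and `τ(Z) = S C D = B Y D = B Z`.
-/

theorem Matrix.map_mul_of_leibniz {R : Type*} [Ring R] {l m o : Type*} [Fintype m] {δ : R → R}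
    (hadd : ∀ u v, δ (u + v) = δ u + δ v) (hmul : ∀ u v, δ (u * v) = u * δ v + δ u * v)
    (M : Matrix l m R) (N : Matrix m o R) : (M * N).map δ = M * N.map δ + M.map δ * N := by
  ext i j
  simp only [Matrix.map_apply, Matrix.mul_apply, Matrix.add_apply, ← Finset.sum_add_distrib,
    ← hmul]
  exact map_sum (AddMonoidHom.mk' δ hadd) _ _

theorem Matrix.map_eq_zero_of_mul_eq_mul {R : Type*} [Ring R] {m : Type*} [Fintype m]
    [DecidableEq m] {δ : R → R}
    (hadd : ∀ u v, δ (u + v) = δ u + δ v) (hmul : ∀ u v, δ (u * v) = u * δ v + δ u * v)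
    {A B C P S Y : Matrix m m R} (hS : IsUnit S) (hSC : S * C = B * Y)
    (hδS : S.map δ = P * S) (hδB : B.map δ = P * B - B * A) (hδY : Y.map δ = A * Y) :
    C.map δ = 0 := by
  have hSδC : S * C.map δ = 0 := by
    have h := Matrix.map_mul_of_leibniz hadd hmul S C
    rw [hSC, Matrix.map_mul_of_leibniz hadd hmul, hδS, hδB, hδY, mul_assoc, sub_mul,
      mul_assoc, mul_assoc, add_sub_cancel, hSC] at h
    simpa only [right_eq_add] using h
  exact (hS.mul_right_eq_zero).1 hSδC

theorem Function.Semiconj.matrix_map {α β : Type*} {m n : Type*} {f : α → β} {ga : α → α}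
    {gb : β → β} (h : Function.Semiconj f ga gb) (M : Matrix m n α) :
    (M.map f).map gb = (M.map ga).map f := by
  simp only [Matrix.map_map, h.comp_eq]

section

variable {K L : Type*} [Field K] [Field L] [Algebra K L]

theorem deriv_iterate_eq_hbarSeq_mul {δL : L → L} {σK : K →+* K} {σL : L →+* L} {ℏ : K}
    (hσcompat : ∀ x : K, σL (algebraMap K L x) = algebraMap K L (σK x))
    (hcomm : ∀ r : L, δL (σL r) = algebraMap K L ℏ * σL (δL r)) (j : ℕ) (r : L) :
    δL ((⇑σL)^[j] r) = algebraMap K L (hbarSeq σK ℏ j) * (⇑σL)^[j] (δL r) := by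
  induction j with
  | zero => simp [hbarSeq]
  | succ j ih =>
    rw [Function.iterate_succ_apply', Function.iterate_succ_apply', hcomm, ih, map_mul,
      hσcompat, hbarSeq, map_mul, mul_assoc]

theorem Matrix.isUnit_of_isUnit_map_algebraMap {m : Type*} [Fintype m] [DecidableEq m]
    {M : Matrix m m K} (h : IsUnit (M.map (algebraMap K L))) : IsUnit M := by
  rw [Matrix.isUnit_iff_isUnit_det] at h ⊢
  rw [← RingHom.mapMatrix_apply, ← RingHom.map_det] at h
  exact (isUnit_map_iff _ _).1 h

theorem Matrix.exists_map_algebraMap_eq_of_deriv_eq_zero {m n : Type*} {δK : K → K} {δL : L → L}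
    (hconst : ∀ x : L, δL x = 0 → ∃ c : K, δK c = 0 ∧ x = algebraMap K L c)
    {M : Matrix m n L} (hM : M.map δL = 0) :
    ∃ M₀ : Matrix m n K, (∀ i j, δK (M₀ i j) = 0) ∧ M₀.map (algebraMap K L) = M := by
  choose M₀ hM₀ hM₀eq using fun i j => hconst (M i j) (congrFun (congrFun hM i) j)
  exact ⟨Matrix.of M₀, hM₀, Matrix.ext fun i j => (hM₀eq i j).symm⟩

end

section

variable {K L : Type*} [Field K] [Field L] [Algebra K L] {m : Type*} [Fintype m] [DecidableEq m]
  {δK : K → K} {δL : L → L} {τK : K →+* K} {τL : L →+* L}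

theorem exists_const_matrix_mul_eq {c : K}
    (hδLadd : ∀ u v : L, δL (u + v) = δL u + δL v)
    (hδLmul : ∀ u v : L, δL (u * v) = u * δL v + δL u * v)
    (hδcompat : Function.Semiconj (algebraMap K L) δK δL)
    (hτcompat : Function.Semiconj (algebraMap K L) τK τL)
    (hcomm : ∀ r : L, δL (τL r) = algebraMap K L c * τL (δL r))
    (hconst : ∀ x : L, δL x = 0 → ∃ c : K, δK c = 0 ∧ x = algebraMap K L c)
    {A B : Matrix m m K} (hB : IsUnit B) (hint : B.map δK + B * A = c • A.map τK * B)
    {Y : Matrix m m L} (hY : IsUnit Y) (hYsol : Y.map δL = A.map (algebraMap K L) * Y) :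
    ∃ C : Matrix m m K, (∀ i j, δK (C i j) = 0) ∧ IsUnit C ∧
      Y.map τL * C.map (algebraMap K L) = B.map (algebraMap K L) * Y := by
  set ι := algebraMap K L
  set S := Y.map τL
  have hS : IsUnit S := hY.map τL.mapMatrix
  have hδS : S.map δL = (ι c • (A.map τK).map ι) * S := by
    have h : S.map δL = ι c • (Y.map δL).map τL := by
      ext i j
      exact hcomm (Y i j)
    rw [h, hYsol, Matrix.map_mul, hτcompat.matrix_map, smul_mul_assoc]
  have hδB : (B.map ι).map δL = (ι c • (A.map τK).map ι) * B.map ι - B.map ι * A.map ι := by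
    rw [hδcompat.matrix_map, eq_sub_of_add_eq hint, Matrix.map_sub _ (map_sub ι), Matrix.map_mul,
      Matrix.map_smul' _ _ _ (map_mul ι), Matrix.map_mul]
  have hSC : S * (S⁻¹ * (B.map ι * Y)) = B.map ι * Y :=
    Matrix.mul_nonsing_inv_cancel_left S _ ((Matrix.isUnit_iff_isUnit_det S).1 hS)
  obtain ⟨C, hCconst, hC⟩ := Matrix.exists_map_algebraMap_eq_of_deriv_eq_zero (L := L) hconst
    (Matrix.map_eq_zero_of_mul_eq_mul hδLadd hδLmul hS hSC hδS hδB hYsol)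
  refine ⟨C, hCconst, Matrix.isUnit_of_isUnit_map_algebraMap (L := L) ?_, hC ▸ hSC⟩
  rw [hC]
  exact (Matrix.isUnit_nonsing_inv_iff.2 hS).mul ((hB.map ι.mapMatrix).mul hY)

theorem exists_isUnit_fundamental_solution {c : K}
    (hδLadd : ∀ u v : L, δL (u + v) = δL u + δL v)
    (hδLmul : ∀ u v : L, δL (u * v) = u * δL v + δL u * v)
    (hδcompat : Function.Semiconj (algebraMap K L) δK δL)
    (hτcompat : Function.Semiconj (algebraMap K L) τK τL)
    (hcomm : ∀ r : L, δL (τL r) = algebraMap K L c * τL (δL r))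
    (hconst : ∀ x : L, δL x = 0 → ∃ c : K, δK c = 0 ∧ x = algebraMap K L c)
    {A B : Matrix m m K} (hB : IsUnit B) (hint : B.map δK + B * A = c • A.map τK * B)
    {Y : Matrix m m L} (hY : IsUnit Y) (hYsol : Y.map δL = A.map (algebraMap K L) * Y)
    (hclosed : ∀ C : Matrix m m K, (∀ i j, δK (C i j) = 0) → IsUnit C →
      ∃ D : Matrix m m K, (∀ i j, δK (D i j) = 0) ∧ IsUnit D ∧ D.map τK = C * D) :
    ∃ Z : Matrix m m L, IsUnit Z ∧
      Z.map δL = A.map (algebraMap K L) * Z ∧ Z.map τL = B.map (algebraMap K L) * Z := by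
  set ι := algebraMap K L
  obtain ⟨C, hCconst, hCunit, hSC⟩ := exists_const_matrix_mul_eq hδLadd hδLmul hδcompat hτcompat
    hcomm hconst hB hint hY hYsol
  obtain ⟨D, hDconst, hDunit, hDτ⟩ := hclosed C hCconst hCunit
  have hδD : (D.map ι).map δL = 0 := by
    rw [hδcompat.matrix_map]
    ext i j
    simp [hDconst]
  refine ⟨Y * D.map ι, hY.mul (hDunit.map ι.mapMatrix), ?_, ?_⟩
  · rw [Matrix.map_mul_of_leibniz hδLadd hδLmul, hδD, mul_zero, zero_add, hYsol, mul_assoc]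
  · rw [Matrix.map_mul, hτcompat.matrix_map, hDτ, Matrix.map_mul, ← mul_assoc, hSC, mul_assoc]

end

theorem stmt_10_general {K L : Type*} [Field K] [Field L] [Algebra K L]
    (δK : K → K) (σK : K →+* K) (δL : L → L) (σL : L →+* L) (ℏ : K)
    (hδLadd : ∀ u v : L, δL (u + v) = δL u + δL v)
    (hδLmul : ∀ u v : L, δL (u * v) = u * δL v + δL u * v)
    (hδcompat : ∀ x : K, δL (algebraMap K L x) = algebraMap K L (δK x))
    (hσcompat : ∀ x : K, σL (algebraMap K L x) = algebraMap K L (σK x))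
    (hcomm : ∀ r : L, δL (σL r) = algebraMap K L ℏ * σL (δL r))
    (hconst : ∀ x : L, δL x = 0 → ∃ c : K, δK c = 0 ∧ x = algebraMap K L c)
    (n : ℕ) (hn : 1 ≤ n) (d : ℕ)
    (A : Matrix (Fin n) (Fin n) K)
    (B : Matrix (Fin n) (Fin n) K) (hB : IsUnit B)
    (hint : B.map δK + B * A = hbarSeq σK ℏ d • (A.map ((⇑σK)^[d])) * B)
    (Y : Matrix (Fin n) (Fin n) L) (hY : IsUnit Y)
    (hYsol : Y.map δL = (A.map (algebraMap K L)) * Y)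
    (hclosed : ∀ (m : ℕ), 1 ≤ m → ∀ C : Matrix (Fin m) (Fin m) K,
      (∀ i j, δK (C i j) = 0) → IsUnit C →
      ∃ D : Matrix (Fin m) (Fin m) K, (∀ i j, δK (D i j) = 0) ∧ IsUnit D ∧
        D.map ((⇑σK)^[d]) = C * D) :
    ∃ Z : Matrix (Fin n) (Fin n) L, IsUnit Z ∧
      Z.map δL = (A.map (algebraMap K L)) * Z ∧
      Z.map ((⇑σL)^[d]) = (B.map (algebraMap K L)) * Z := by
  simp only [← RingHom.coe_pow] at hint hclosed ⊢
  have hσdcompat : Function.Semiconj (algebraMap K L) ⇑(σK ^ d) ⇑(σL ^ d) := by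
    simpa only [RingHom.coe_pow] using
      Function.Semiconj.iterate_right (fun x => (hσcompat x).symm) d
  have hσdcomm (r : L) : δL ((σL ^ d) r) = algebraMap K L (hbarSeq σK ℏ d) * (σL ^ d) (δL r) := by
    simpa only [RingHom.coe_pow] using deriv_iterate_eq_hbarSeq_mul hσcompat hcomm d r
  exact exists_isUnit_fundamental_solution hδLadd hδLmul (fun x => (hδcompat x).symm) hσdcompat
    hσdcomm hconst hB hint hY hYsol (hclosed n hn)

/-- if `δ(y) = A·y` admits `B ∈ GLₙ(K)` with the integrability condition
`δ(B) + B·A = ℏ_d·σ^d(A)·B`, and `L|K` is a δσ-field extension with `L^δ = K^δ =: k`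
containing a fundamental solution matrix `Y` of `δ(y) = A·y`, and `k` is linearly
σ^d-closed (phrased via matrices over `K` with δ-constant entries), then the combined
system `δ(Z) = A·Z`, `σ^d(Z) = B·Z` has an invertible solution `Z` over `L`. -/
theorem stmt_10 {K L : Type*} [Field K] [Field L] [Algebra K L] [CharZero K]
    (δK : K → K) (σK : K →+* K) (δL : L → L) (σL : L →+* L) (ℏ : K)
    (hδLadd : ∀ u v : L, δL (u + v) = δL u + δL v)
    (hδLmul : ∀ u v : L, δL (u * v) = u * δL v + δL u * v)
    (hδcompat : ∀ x : K, δL (algebraMap K L x) = algebraMap K L (δK x))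
    (hσcompat : ∀ x : K, σL (algebraMap K L x) = algebraMap K L (σK x))
    (hℏ0 : ℏ ≠ 0) (hδℏ : δK ℏ = 0)
    (hcomm : ∀ r : L, δL (σL r) = algebraMap K L ℏ * σL (δL r))
    (hconst : ∀ x : L, δL x = 0 → ∃ c : K, δK c = 0 ∧ x = algebraMap K L c)
    (n : ℕ) (hn : 1 ≤ n) (d : ℕ) (hd : 1 ≤ d)
    (A : Matrix (Fin n) (Fin n) K)
    (B : Matrix (Fin n) (Fin n) K) (hB : IsUnit B)
    (hint : B.map δK + B * A = hbarSeq σK ℏ d • (A.map ((⇑σK)^[d])) * B)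
    (Y : Matrix (Fin n) (Fin n) L) (hY : IsUnit Y)
    (hYsol : Y.map δL = (A.map (algebraMap K L)) * Y)
    (hclosed : ∀ (m : ℕ), 1 ≤ m → ∀ C : Matrix (Fin m) (Fin m) K,
      (∀ i j, δK (C i j) = 0) → IsUnit C →
      ∃ D : Matrix (Fin m) (Fin m) K, (∀ i j, δK (D i j) = 0) ∧ IsUnit D ∧
        D.map ((⇑σK)^[d]) = C * D) :
    ∃ Z : Matrix (Fin n) (Fin n) L, IsUnit Z ∧
      Z.map δL = (A.map (algebraMap K L)) * Z ∧
      Z.map ((⇑σL)^[d]) = (B.map (algebraMap K L)) * Z :=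
  stmt_10_general δK σK δL σL ℏ hδLadd hδLmul hδcompat hσcompat hcomm hconst n hn d A B hB hint Y hY
    hYsol hclosed
end

section
/- Let K be a field of characteristic zero equipped with a derivation δ, let k = K^δ be its field of constants, and let A ∈ K^{n×n}. Let k̃ be a field extension of k, assume the ring K ⊗_k k̃ is an integral domain (this holds automatically since k is relatively algebraically closed in K), and let K̃ be its fraction field, equipped with a derivation δ̃ extending δ and vanishing on k̃. Then the solution space Ṽ = {z ∈ K̃ⁿ : δ̃(z) = A·z} (a k̃-vector space) equals the k̃-linear span inside K̃ⁿ of V = {z ∈ Kⁿ : δ(z) = A·z}; equivalently, the natural map V ⊗_k k̃ → Ṽ is an isomorphism of k̃-vector spaces. -/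
/-- The image of `x ∈ K` in the fraction field of `K ⊗_k k̃`. -/
noncomputable def stmt11ιK {k K kt : Type*} [Field k] [Field K] [Field kt]
    [Algebra k K] [Algebra k kt] (x : K) : FractionRing (TensorProduct k K kt) :=
  algebraMap (TensorProduct k K kt) (FractionRing (TensorProduct k K kt))
    (TensorProduct.tmul k x (1 : kt))

/-- The image of `c ∈ k̃` in the fraction field of `K ⊗_k k̃`. -/
noncomputable def stmt11ιc {k K kt : Type*} [Field k] [Field K] [Field kt]
    [Algebra k K] [Algebra k kt] (c : kt) : FractionRing (TensorProduct k K kt) :=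
  algebraMap (TensorProduct k K kt) (FractionRing (TensorProduct k K kt))
    (TensorProduct.tmul k (1 : K) c)


/-!
Write `R = K ⊗_k k̃` and `D = δ ⊗ 1` for the derivation of `R`. For a solution `z ∈ K̃ⁿ`, the
denominators `d ∈ R` with `d • z ∈ Rⁿ` form a nonzero ideal, which is `D`-stable because
`δ̃ (d z) = D d · z + d · A z`. In a `K`-basis `1 ⊗ b_α` of `R`, take a nonzero denominator of minimal
support with one coordinate equal to `1`: `D` kills that coordinate, so by minimality `D d = 0`.
Since `K^δ = k` and `k̃` is flat over `k`, the kernel of `D` is `1 ⊗ k̃`, so `d` is a unit and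
`z ∈ Rⁿ`. Finally `D` acts coordinatewise, so writing `z = Σ_α v_α ⊗ b_α` every `v_α ∈ Kⁿ` is a
solution.
-/

open TensorProduct Module

section Denominators

variable {R S ι : Type*} [CommRing R] [CommRing S] [Algebra R S]

def denominatorIdeal (z : ι → S) : Ideal R where
  carrier := {d | ∀ i, IsLocalization.IsInteger R (d • z i)}
  add_mem' ha hb i := by
    rw [add_smul]
    exact IsLocalization.isInteger_add (ha i) (hb i)
  zero_mem' i := by
    rw [zero_smul]
    exact IsLocalization.isInteger_zero
  smul_mem' c d hd i := by
    rw [smul_eq_mul, mul_smul]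
    exact IsLocalization.isInteger_smul (hd i)

theorem mem_denominatorIdeal {z : ι → S} {d : R} :
    d ∈ denominatorIdeal z ↔ ∀ i, IsLocalization.IsInteger R (d • z i) :=
  Iff.rfl

theorem denominatorIdeal_ne_bot [Nontrivial R] [IsFractionRing R S] [Finite ι] (z : ι → S) :
    denominatorIdeal (R := R) z ≠ ⊥ := by
  obtain ⟨q, hq⟩ := IsLocalization.exist_integer_multiples_of_finite (nonZeroDivisors R) z
  exact (Submodule.ne_bot_iff _).2 ⟨q, hq, nonZeroDivisors.coe_ne_zero q⟩

theorem isInteger_of_denominatorIdeal_eq_top {z : ι → S} (h : denominatorIdeal (R := R) z = ⊤)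
    (i : ι) : IsLocalization.IsInteger R (z i) := by
  simpa using mem_denominatorIdeal.1 (h ▸ Submodule.mem_top : (1 : R) ∈ denominatorIdeal z) i

theorem mem_denominatorIdeal_of_isSolution [Fintype ι] {D : R → R} {δ : S → S}
    (hmul : ∀ a b, δ (a * b) = a * δ b + δ a * b)
    (hcomm : ∀ r, δ (algebraMap R S r) = algebraMap R S (D r))
    (a : Matrix ι ι R) {z : ι → S} (hz : ∀ i, δ (z i) = ∑ j, algebraMap R S (a i j) * z j)
    {d : R} (hd : d ∈ denominatorIdeal z) : D d ∈ denominatorIdeal z := by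
  choose r hr using hd
  simp only [Algebra.smul_def] at hr
  refine fun i => ⟨D (r i) - ∑ j, a i j * r j, ?_⟩
  have hleibniz := hmul (algebraMap R S d) (z i)
  rw [← hr i, hcomm, hcomm, hz i, Finset.mul_sum] at hleibniz
  simp only [Algebra.smul_def, map_sub, map_sum, map_mul, hleibniz, hr,
    mul_left_comm (algebraMap R S (a _ _)), add_sub_cancel_left]

end Denominators

section ConstantExtension

variable {k K V : Type*}

theorem Algebra.TensorProduct.basis_repr_rTensor [CommRing k] [CommRing K] [Algebra k K]
    [AddCommGroup V] [Module k V] {ι : Type*} (b : Basis ι k V) (f : K →ₗ[k] K)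
    (x : K ⊗[k] V) (i : ι) :
    (basis K b).repr (f.rTensor V x) i = f ((basis K b).repr x i) := by
  induction x using TensorProduct.induction_on with
  | zero => simp
  | tmul a v =>
    simp only [LinearMap.rTensor_tmul, basis_repr_tmul, Finsupp.smul_apply,
      Finsupp.mapRange_apply, smul_eq_mul, ← Algebra.commutes, ← Algebra.smul_def, map_smul]
  | add x y hx hy => simp only [map_add, Finsupp.add_apply, hx, hy]

theorem exists_eq_one_tmul_of_rTensor_eq_zero [CommRing k] [CommRing K] [Algebra k K]
    [AddCommGroup V] [Module k V] [Module.Flat k V] {δ : K →ₗ[k] K}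
    (hδ : Function.Exact (Algebra.linearMap k K) δ) {x : K ⊗[k] V} (hx : δ.rTensor V x = 0) :
    ∃ v, x = (1 : K) ⊗ₜ v := by
  obtain ⟨y, rfl⟩ := (Module.Flat.rTensor_exact V hδ x).1 hx
  refine ⟨TensorProduct.lid k V y, ?_⟩
  conv_lhs => rw [← (TensorProduct.lid k V).symm_apply_apply y, TensorProduct.lid_symm_apply]
  simp

variable [Field k] [Field K] [Algebra k K] [AddCommGroup V] [Module k V]

theorem Submodule.exists_one_tmul_mem_of_rTensor_mem {δ : K →ₗ[k] K}
    (hδ : Function.Exact (Algebra.linearMap k K) δ) {N : Submodule K (K ⊗[k] V)}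
    (hN : ∀ x ∈ N, δ.rTensor V x ∈ N) (hne : N ≠ ⊥) : ∃ v ≠ 0, (1 : K) ⊗ₜ[k] v ∈ N := by
  classical
  let B := Algebra.TensorProduct.basis K (Basis.ofVectorSpace k V)
  suffices key : ∀ m, ∀ x ∈ N, x ≠ 0 → (B.repr x).support.card = m →
      ∃ v ≠ 0, (1 : K) ⊗ₜ[k] v ∈ N by
    obtain ⟨x, hxN, hx0⟩ := Submodule.exists_mem_ne_zero_of_ne_bot hne
    exact key _ x hxN hx0 rfl
  intro m
  induction m using Nat.strong_induction_on with
  | _ m ih =>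
  rintro x hxN hx0 rfl
  obtain ⟨α, hα⟩ : (B.repr x).support.Nonempty := by simpa using hx0
  -- normalize one coordinate to `1`: since `δ 1 = 0`, `δ` then kills that coordinate
  set y := (B.repr x α)⁻¹ • x
  have hy : B.repr y = (B.repr x α)⁻¹ • B.repr x := map_smul _ _ _
  have hyα : B.repr y α = 1 := by
    rw [hy, Finsupp.smul_apply, smul_eq_mul, inv_mul_cancel₀ (Finsupp.mem_support_iff.1 hα)]
  have hysupp : (B.repr y).support = (B.repr x).support :=
    hy ▸ Finsupp.support_smul_eq (inv_ne_zero (Finsupp.mem_support_iff.1 hα))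
  have hyN : y ∈ N := N.smul_mem _ hxN
  by_cases hDy : δ.rTensor V y = 0
  · obtain ⟨v, hv⟩ := exists_eq_one_tmul_of_rTensor_eq_zero hδ hDy
    refine ⟨v, ?_, hv ▸ hyN⟩
    rintro rfl
    simp [hv] at hyα
  · have hδ1 : δ 1 = 0 := (hδ 1).2 ⟨1, (algebraMap k K).map_one⟩
    have hsupp : (B.repr (δ.rTensor V y)).support ⊆ (B.repr y).support.erase α := by
      intro β hβ
      rw [Finsupp.mem_support_iff, Algebra.TensorProduct.basis_repr_rTensor] at hβ
      refine Finset.mem_erase.2 ⟨?_, Finsupp.mem_support_iff.2 fun h => hβ (by rw [h, map_zero])⟩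
      rintro rfl
      exact hβ (by rw [hyα, hδ1])
    refine ih _ ?_ _ (hN y hyN) hDy rfl
    calc _ ≤ ((B.repr y).support.erase α).card := Finset.card_le_card hsupp
      _ < (B.repr x).support.card := hysupp ▸ Finset.card_erase_lt_of_mem (hysupp ▸ hα)

end ConstantExtension

section LinearSystem

variable {k K V n : Type*} [Field k] [Field K] [Algebra k K] [AddCommGroup V] [Module k V]
  [Fintype n] (δ : K →ₗ[k] K) (A : Matrix n n K)

theorem rTensor_sum_tmul_of_isSolution {m : ℕ} (c : Fin m → V) (v : Fin m → n → K)
    (hv : ∀ t i, δ (v t i) = ∑ j, A i j * v t j) (i : n) :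
    δ.rTensor V (∑ t, v t i ⊗ₜ[k] c t) = ∑ j, A i j • ∑ t, v t j ⊗ₜ[k] c t := by
  simp only [map_sum, LinearMap.rTensor_tmul, hv, TensorProduct.sum_tmul, Finset.smul_sum,
    TensorProduct.smul_tmul', smul_eq_mul]
  exact Finset.sum_comm

theorem exists_sum_tmul_of_isSolution (w : n → K ⊗[k] V)
    (hw : ∀ i, δ.rTensor V (w i) = ∑ j, A i j • w j) :
    ∃ (m : ℕ) (c : Fin m → V) (v : Fin m → n → K),
      (∀ t i, δ (v t i) = ∑ j, A i j * v t j) ∧ ∀ i, w i = ∑ t, v t i ⊗ₜ[k] c t := by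
  classical
  let b := Basis.ofVectorSpace k V
  let B := Algebra.TensorProduct.basis K b
  let T := Finset.univ.biUnion fun i => (B.repr (w i)).support
  let e : Fin T.card ≃ T := T.equivFin.symm
  have hcoord : ∀ α i, δ (B.repr (w i) α) = ∑ j, A i j * B.repr (w j) α := fun α i => by
    rw [← Algebra.TensorProduct.basis_repr_rTensor, hw, map_sum, Finset.sum_apply']
    simp only [map_smul, Finsupp.smul_apply, smul_eq_mul]
    rfl
  refine ⟨T.card, fun t => b (e t), fun t i => B.repr (w i) (e t), fun t i => hcoord _ i,
    fun i => ?_⟩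
  calc w i = ∑ α ∈ T, B.repr (w i) α • B α := by
        conv_lhs => rw [← B.linearCombination_repr (w i)]
        exact Finsupp.sum_of_support_subset _
          (Finset.subset_biUnion_of_mem (fun j => (B.repr (w j)).support) (Finset.mem_univ i))
          _ fun _ _ => zero_smul _ _
    _ = ∑ α ∈ T, B.repr (w i) α ⊗ₜ[k] b α := by
        simp only [B, Algebra.TensorProduct.basis_repr_symm_apply']
    _ = ∑ t, B.repr (w i) (e t) ⊗ₜ[k] b (e t) := by
        rw [← Finset.sum_coe_sort T]
        exact (Equiv.sum_comp e _).symm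

end LinearSystem

theorem exists_algebraMap_eq_of_isSolution {k K L S : Type*} [Field k] [Field K] [Field L]
    [Algebra k K] [Algebra k L] [CommRing S] [Algebra (K ⊗[k] L) S]
    [IsFractionRing (K ⊗[k] L) S] {δ : K →ₗ[k] K} (hδ : Function.Exact (Algebra.linearMap k K) δ)
    {δS : S → S} (hmul : ∀ a b, δS (a * b) = a * δS b + δS a * b)
    (hcomm : ∀ r, δS (algebraMap _ S r) = algebraMap _ S (δ.rTensor L r))
    {n : Type*} [Fintype n] (a : Matrix n n (K ⊗[k] L)) {z : n → S}
    (hz : ∀ i, δS (z i) = ∑ j, algebraMap _ S (a i j) * z j) :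
    ∃ w : n → K ⊗[k] L, ∀ i, algebraMap _ S (w i) = z i := by
  obtain ⟨c, hc0, hc⟩ := Submodule.exists_one_tmul_mem_of_rTensor_mem hδ
    (N := (denominatorIdeal (R := K ⊗[k] L) z).restrictScalars K)
    (fun _ hx => mem_denominatorIdeal_of_isSolution hmul hcomm a hz hx)
    (by rw [Ne, Submodule.restrictScalars_eq_bot_iff]; exact denominatorIdeal_ne_bot z)
  have hunit : IsUnit ((1 : K) ⊗ₜ[k] c) := hc0.isUnit.map Algebra.TensorProduct.includeRight
  choose w hw using isInteger_of_denominatorIdeal_eq_top (Ideal.eq_top_of_isUnit_mem _ hc hunit)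
  exact ⟨w, hw⟩

section FractionField

variable {k K L : Type*} [Field k] [Field K] [Field L] [Algebra k K] [Algebra k L]

theorem stmt11ιc_mul_stmt11ιK (c : L) (x : K) :
    stmt11ιc (k := k) (K := K) c * stmt11ιK x = algebraMap _ _ (x ⊗ₜ[k] c) := by
  rw [stmt11ιc, stmt11ιK, ← map_mul, Algebra.TensorProduct.tmul_mul_tmul, one_mul, mul_one]

theorem stmt11ιK_mul_algebraMap (x : K) (r : K ⊗[k] L) :
    stmt11ιK x * algebraMap _ (FractionRing (K ⊗[k] L)) r = algebraMap _ _ (x • r) := by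
  rw [stmt11ιK, ← map_mul, Algebra.smul_def, Algebra.TensorProduct.algebraMap_apply]
  rfl

theorem apply_algebraMap_eq_algebraMap_rTensor (δ : K →ₗ[k] K)
    {δt : FractionRing (K ⊗[k] L) → FractionRing (K ⊗[k] L)}
    (hadd : ∀ a b, δt (a + b) = δt a + δt b) (hmul : ∀ a b, δt (a * b) = a * δt b + δt a * b)
    (hK : ∀ x : K, δt (stmt11ιK x) = stmt11ιK (δ x)) (hL : ∀ c : L, δt (stmt11ιc (K := K) c) = 0)
    (r : K ⊗[k] L) : δt (algebraMap _ _ r) = algebraMap _ _ (δ.rTensor L r) := by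
  induction r using TensorProduct.induction_on with
  | zero => simpa using hadd 0 0
  | tmul x c =>
    rw [LinearMap.rTensor_tmul, ← stmt11ιc_mul_stmt11ιK, ← stmt11ιc_mul_stmt11ιK, hmul, hK, hL,
      zero_mul, add_zero]
  | add r s hr hs => rw [map_add, hadd, hr, hs, map_add, map_add]

end FractionField

theorem stmt_11_general {k K kt : Type*} [Field k] [Field K] [Field kt]
    [Algebra k K] [Algebra k kt]
    (δK : K → K)
    (hδadd : ∀ a b : K, δK (a + b) = δK a + δK b)
    (hδmul : ∀ a b : K, δK (a * b) = a * δK b + δK a * b)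
    (hconst : ∀ a : K, δK a = 0 ↔ ∃ c : k, algebraMap k K c = a)
    (δt : FractionRing (TensorProduct k K kt) → FractionRing (TensorProduct k K kt))
    (hδtadd : ∀ a b, δt (a + b) = δt a + δt b)
    (hδtmul : ∀ a b, δt (a * b) = a * δt b + δt a * b)
    (hδtK : ∀ x : K, δt (stmt11ιK (kt := kt) x) = stmt11ιK (kt := kt) (δK x))
    (hδtk : ∀ c : kt, δt (stmt11ιc (K := K) c) = 0)
    (n : ℕ) (A : Matrix (Fin n) (Fin n) K) :
    {z : Fin n → FractionRing (TensorProduct k K kt) |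
        ∀ i, δt (z i) = ∑ j, stmt11ιK (kt := kt) (A i j) * z j} =
    {z : Fin n → FractionRing (TensorProduct k K kt) |
        ∃ (m : ℕ) (c : Fin m → kt) (v : Fin m → Fin n → K),
          (∀ t i, δK (v t i) = ∑ j, A i j * v t j) ∧
          ∀ i, z i = ∑ t, stmt11ιc (K := K) (c t) * stmt11ιK (kt := kt) (v t i)} := by
  set φ := algebraMap (K ⊗[k] kt) (FractionRing (K ⊗[k] kt))
  let δ : K →ₗ[k] K :=
    { toFun := δK
      map_add' := hδadd
      map_smul' := fun c a => by
        rw [Algebra.smul_def, hδmul, (hconst _).2 ⟨c, rfl⟩, zero_mul, add_zero, RingHom.id_apply,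
          Algebra.smul_def] }
  have hexact : Function.Exact (Algebra.linearMap k K) δ := hconst
  have hcomm : ∀ r, δt (φ r) = φ (δ.rTensor kt r) :=
    apply_algebraMap_eq_algebraMap_rTensor δ hδtadd hδtmul hδtK hδtk
  have hsolution : ∀ w : Fin n → K ⊗[k] kt,
      (∀ i, δt (φ (w i)) = ∑ j, stmt11ιK (A i j) * φ (w j)) ↔
        ∀ i, δ.rTensor kt (w i) = ∑ j, A i j • w j := fun w => by
    simp only [hcomm, φ, stmt11ιK_mul_algebraMap, ← map_sum, (IsFractionRing.injective _ _).eq_iff]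
  have hφ : ∀ {m} (c : Fin m → kt) (v : Fin m → Fin n → K) (i : Fin n),
      ∑ t, stmt11ιc (K := K) (c t) * stmt11ιK (v t i) = φ (∑ t, v t i ⊗ₜ[k] c t) := by
    simp [map_sum, stmt11ιc_mul_stmt11ιK, φ]
  ext z
  constructor
  · intro hz
    obtain ⟨w, rfl⟩ : ∃ w, φ ∘ w = z := (exists_algebraMap_eq_of_isSolution hexact
      hδtmul hcomm (fun i j => A i j ⊗ₜ 1) hz).imp fun _ => funext
    obtain ⟨m, c, v, hv, hw⟩ := exists_sum_tmul_of_isSolution δ A w ((hsolution w).1 hz)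
    exact ⟨m, c, v, hv, fun i => by rw [hφ, ← hw]; rfl⟩
  · rintro ⟨m, c, v, hv, hz⟩
    obtain rfl : z = fun i => φ (∑ t, v t i ⊗ₜ[k] c t) := funext fun i => (hz i).trans (hφ c v i)
    exact (hsolution _).2 (rTensor_sum_tmul_of_isSolution δ A c v hv)

/-- descent of solutions of linear differential systems along a constant
field extension.  Let `K` be a δ-field of characteristic zero with constants `k = K^δ`,
`A ∈ K^{n×n}`, `k̃` a field extension of `k` with `K ⊗_k k̃` a domain, and `K̃` its
fraction field with the derivation `δ̃` extending `δ` and vanishing on `k̃`.  Then the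
solution space `Ṽ = {z ∈ K̃ⁿ : δ̃(z) = A·z}` equals the `k̃`-linear span of
`V = {z ∈ Kⁿ : δ(z) = A·z}` inside `K̃ⁿ`. -/
theorem stmt_11 {k K kt : Type*} [Field k] [Field K] [Field kt] [CharZero K]
    [Algebra k K] [Algebra k kt]
    [IsDomain (TensorProduct k K kt)]
    (δK : K → K)
    (hδadd : ∀ a b : K, δK (a + b) = δK a + δK b)
    (hδmul : ∀ a b : K, δK (a * b) = a * δK b + δK a * b)
    (hconst : ∀ a : K, δK a = 0 ↔ ∃ c : k, algebraMap k K c = a)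
    (δt : FractionRing (TensorProduct k K kt) → FractionRing (TensorProduct k K kt))
    (hδtadd : ∀ a b, δt (a + b) = δt a + δt b)
    (hδtmul : ∀ a b, δt (a * b) = a * δt b + δt a * b)
    (hδtK : ∀ x : K, δt (stmt11ιK (kt := kt) x) = stmt11ιK (kt := kt) (δK x))
    (hδtk : ∀ c : kt, δt (stmt11ιc (K := K) c) = 0)
    (n : ℕ) (A : Matrix (Fin n) (Fin n) K) :
    {z : Fin n → FractionRing (TensorProduct k K kt) |
        ∀ i, δt (z i) = ∑ j, stmt11ιK (kt := kt) (A i j) * z j} =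
    {z : Fin n → FractionRing (TensorProduct k K kt) |
        ∃ (m : ℕ) (c : Fin m → kt) (v : Fin m → Fin n → K),
          (∀ t i, δK (v t i) = ∑ j, A i j * v t j) ∧
          ∀ i, z i = ∑ t, stmt11ιc (K := K) (c t) * stmt11ιK (kt := kt) (v t i)} :=
  stmt_11_general δK hδadd hδmul hconst δt hδtadd hδtmul hδtK hδtk n A
end

section
/- Let K be a δσ-field of characteristic zero with k = K^δ, let A ∈ K^{n×n} and d ≥ 1. Let k̃ be a field extension of k, assume K ⊗_k k̃ is an integral domain, and let K̃ be its fraction field equipped with a derivation δ̃ extending δ and vanishing on k̃. Then δ(y) = Ay is σ^d-integrable over K, i.e. there exists B ∈ GLₙ(K) with δ(B) + B·A = ℏ_d·σ^d(A)·B, if and only if there exists B̃ ∈ GLₙ(K̃) with δ̃(B̃) + B̃·A = ℏ_d·σ^d(A)·B̃ (here ℏ_d ∈ K and the matrix σ^d(A) ∈ K^{n×n} are computed in K and viewed in K̃ via the natural embedding). -/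
/-- The image of `x ∈ K` in the fraction field of `K ⊗_k k̃`. -/
noncomputable def stmt12ιK {k K kt : Type*} [Field k] [Field K] [Field kt]
    [Algebra k K] [Algebra k kt] (x : K) : FractionRing (TensorProduct k K kt) :=
  algebraMap (TensorProduct k K kt) (FractionRing (TensorProduct k K kt))
    (TensorProduct.tmul k x (1 : kt))

/-- The image of `c ∈ k̃` in the fraction field of `K ⊗_k k̃`. -/
noncomputable def stmt12ιc {k K kt : Type*} [Field k] [Field K] [Field kt]
    [Algebra k K] [Algebra k kt] (c : kt) : FractionRing (TensorProduct k K kt) :=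
  algebraMap (TensorProduct k K kt) (FractionRing (TensorProduct k K kt))
    (TensorProduct.tmul k (1 : K) c)

/-!
Write `R = K ⊗_k k̃`. Since `k` is exactly the field of constants of `δ`, the ring `R` is
`δ`-simple for `δ ⊗ id`: in a nonzero stable ideal, an element with the fewest nonzero coordinates
in a basis `1 ⊗ eᵢ` can be normalised to have a coordinate `1`, so its derivative has fewer
coordinates and vanishes, which makes it a unit `1 ⊗ u`. The denominators of a solution `B̃`
over `Frac R` form a stable nonzero ideal, hence `B̃` already has entries in `R`. Expanding
`B̃ = ∑ Bᵢ ⊗ eᵢ`, each `Bᵢ` is a solution over `K` because `δ ⊗ id` acts coordinatewise, and as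
`det (∑ xᵢ Bᵢ)` is a nonzero polynomial (its value at `x = e` is `det B̃`) and `k` is infinite,
some `k`-linear combination `∑ cᵢ Bᵢ` is invertible.
-/

open scoped TensorProduct

theorem MvPolynomial.exists_eval_algebraMap_ne_zero {k K ι : Type*} [Field k] [Infinite k]
    [Field K] [Algebra k K] {P : MvPolynomial ι K} (hP : P ≠ 0) :
    ∃ c : ι → k, MvPolynomial.eval (fun i => algebraMap k K (c i)) P ≠ 0 := by
  by_contra! h
  refine hP (MvPolynomial.funext_set (fun _ => Set.range (algebraMap k K))
    (fun _ => Set.infinite_range_of_injective (algebraMap k K).injective) fun x hx => ?_)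
  choose c hc using fun i => hx i (Set.mem_univ i)
  rw [map_zero, ← h c]
  congr
  funext i
  exact (hc i).symm

namespace Matrix

theorem exists_det_sum_smul_ne_zero {k K R ι n : Type*} [Field k] [Infinite k] [Field K]
    [Algebra k K] [CommRing R] [Algebra K R] [Fintype n] [DecidableEq n] (s : Finset ι)
    (C : ι → Matrix n n K) (g : ι → R)
    (h : (∑ i ∈ s, g i • (C i).map (algebraMap K R)).det ≠ 0) :
    ∃ c : ι → k, (∑ i ∈ s, c i • C i).det ≠ 0 := by
  set P := (∑ i ∈ s,
    (MvPolynomial.X i : MvPolynomial ι K) • (C i).map (MvPolynomial.C (σ := ι))).det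
  have hP : MvPolynomial.aeval g P = (∑ i ∈ s, g i • (C i).map (algebraMap K R)).det := by
    rw [AlgHom.map_det]
    congr 1
    ext p q
    simp [sum_apply]
  obtain ⟨c, hc⟩ := MvPolynomial.exists_eval_algebraMap_ne_zero (k := k) (P := P)
    fun h0 => h (by rw [← hP, h0, map_zero])
  refine ⟨c, fun h0 => hc ?_⟩
  rw [MvPolynomial.eval, RingHom.map_det, ← h0]
  congr 1
  ext p q
  simp only [RingHom.mapMatrix_apply, map_apply, sum_apply, smul_apply, map_sum]
  simp [Algebra.smul_def]

theorem map_mul_map_algebraMap {K R l m n : Type*} [Field K] [CommRing R] [Algebra K R]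
    [Fintype m] (f : R →ₗ[K] K) (C : Matrix l m R) (A : Matrix m n K) :
    (C * A.map (algebraMap K R)).map f = C.map f * A := by
  ext p q
  simp only [map_apply, mul_apply, map_sum]
  refine Finset.sum_congr rfl fun l _ => ?_
  rw [mul_comm, ← Algebra.smul_def, map_smul, smul_eq_mul, mul_comm]

theorem map_map_algebraMap_mul {K R l m n : Type*} [Field K] [CommRing R] [Algebra K R]
    [Fintype m] (f : R →ₗ[K] K) (A : Matrix l m K) (C : Matrix m n R) :
    (A.map (algebraMap K R) * C).map f = A * C.map f := by
  ext p q
  simp [mul_apply, ← Algebra.smul_def]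

theorem map_gauge {K F n : Type*} [CommRing K] [CommRing F] [Fintype n] (ψ : K →+* F)
    {δK : K → K} {δF : F → F} (hψ : ∀ x, δF (ψ x) = ψ (δK x)) {A M B : Matrix n n K}
    (hB : B.map δK + B * A = M * B) :
    (B.map ψ).map δF + B.map ψ * A.map ψ = M.map ψ * B.map ψ := by
  have h := congrArg (map · ψ) hB
  simpa [Matrix.map_add, Matrix.map_mul, Matrix.map_map, Function.comp_def, hψ] using h

end Matrix

namespace IsFractionRing

variable {R F n : Type*} [CommRing R] [Nontrivial R] [CommRing F] [Algebra R F]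
  [IsFractionRing R F] [Fintype n] {δR : R → R} {δF : F → F}

theorem exists_map_eq_of_gauge (hmul : ∀ a b, δF (a * b) = a * δF b + δF a * b)
    (hcomm : ∀ r, δF (algebraMap R F r) = algebraMap R F (δR r))
    (hsimple : ∀ I : Ideal R, (∀ r ∈ I, δR r ∈ I) → I ≠ ⊥ → I = ⊤)
    {A M : Matrix n n R} {B : Matrix n n F}
    (hB : B.map δF + B * A.map (algebraMap R F) = M.map (algebraMap R F) * B) :
    ∃ C : Matrix n n R, C.map (algebraMap R F) = B := by
  set I := (1 : Submodule R F).colon (Set.range fun pq : n × n => B pq.1 pq.2)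
  have hmemI : ∀ r, r ∈ I ↔ ∀ p q, algebraMap R F r * B p q ∈ (1 : Submodule R F) := by
    intro r
    simp only [I, Submodule.mem_colon, Set.forall_mem_range, Prod.forall, Algebra.smul_def]
  have hδB : ∀ p q, δF (B p q) =
      ∑ l, algebraMap R F (M p l) * B l q - ∑ l, B p l * algebraMap R F (A l q) := by
    intro p q
    refine eq_sub_of_add_eq ?_
    simpa [Matrix.mul_apply] using congrFun (congrFun hB p) q
  -- Leibniz: `δ(r) B = δ(r B) - r δ(B)`, and both terms have entries in `R` when `r B` has.
  have hstable : ∀ r ∈ I, δR r ∈ I := by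
    intro r hr
    rw [hmemI] at hr ⊢
    intro p q
    obtain ⟨s, hs⟩ := Submodule.mem_one.mp (hr p q)
    have key : algebraMap R F (δR r) * B p q =
        algebraMap R F (δR s) - algebraMap R F r * δF (B p q) := by
      rw [← hcomm s, hs, hmul, hcomm]
      ring
    rw [key, hδB, mul_sub, Finset.mul_sum, Finset.mul_sum]
    refine sub_mem (Submodule.mem_one.mpr ⟨_, rfl⟩)
      (sub_mem (Submodule.sum_mem _ fun l _ => ?_) (Submodule.sum_mem _ fun l _ => ?_))
    · rw [mul_left_comm, ← Algebra.smul_def]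
      exact Submodule.smul_mem _ _ (hr l q)
    · rw [← mul_assoc, mul_comm, ← Algebra.smul_def]
      exact Submodule.smul_mem _ _ (hr p l)
  have hne : I ≠ ⊥ := by
    obtain ⟨d, hd⟩ := IsLocalization.exist_integer_multiples_of_finite (nonZeroDivisors R)
      (fun pq : n × n => B pq.1 pq.2)
    refine (Submodule.ne_bot_iff I).mpr
      ⟨d, (hmemI _).mpr fun p q => ?_, nonZeroDivisors.coe_ne_zero d⟩
    obtain ⟨y, hy⟩ := hd (p, q)
    exact Submodule.mem_one.mpr ⟨y, by rw [hy, Algebra.smul_def]⟩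
  have hint : ∀ p q, ∃ c, algebraMap R F c = B p q := fun p q => by
    simpa using Submodule.mem_one.mp ((hmemI 1).mp (hsimple I hstable hne ▸ Submodule.mem_top) p q)
  choose C hC using hint
  exact ⟨Matrix.of C, by ext p q; exact hC p q⟩

theorem exists_det_ne_zero_gauge [DecidableEq n]
    (hmul : ∀ a b, δF (a * b) = a * δF b + δF a * b)
    (hcomm : ∀ r, δF (algebraMap R F r) = algebraMap R F (δR r))
    (hsimple : ∀ I : Ideal R, (∀ r ∈ I, δR r ∈ I) → I ≠ ⊥ → I = ⊤)
    {A M : Matrix n n R} {B : Matrix n n F} (hBu : IsUnit B)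
    (hB : B.map δF + B * A.map (algebraMap R F) = M.map (algebraMap R F) * B) :
    ∃ C : Matrix n n R, C.det ≠ 0 ∧ C.map δR + C * A = M * C := by
  obtain ⟨C, rfl⟩ := exists_map_eq_of_gauge hmul hcomm hsimple hB
  have hinj := IsFractionRing.injective R F
  refine ⟨C, fun h0 => ?_, Matrix.map_injective hinj ?_⟩
  · have hdet := (Matrix.isUnit_iff_isUnit_det _).mp hBu
    rw [← RingHom.mapMatrix_apply, ← RingHom.map_det, h0, map_zero, isUnit_zero_iff,
      ← map_zero (algebraMap R F), ← map_one (algebraMap R F)] at hdet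
    exact zero_ne_one (hinj hdet)
  · dsimp only
    rw [Matrix.map_add _ (map_add _), Matrix.map_mul, Matrix.map_mul, ← hB, Matrix.map_map,
      Matrix.map_map]
    congr 2
    funext r
    exact (hcomm r).symm

end IsFractionRing

theorem Derivation.exists_coe_eq {k K : Type*} [Field k] [Field K] [Algebra k K] (δ : K → K)
    (hadd : ∀ a b, δ (a + b) = δ a + δ b) (hmul : ∀ a b, δ (a * b) = a * δ b + δ a * b)
    (hk : ∀ c : k, δ (algebraMap k K c) = 0) :
    ∃ D : Derivation k K K, ⇑D = δ := by
  refine ⟨Derivation.mk' ⟨⟨δ, hadd⟩, fun c a => ?_⟩ fun a b => ?_, rfl⟩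
  · simp [Algebra.smul_def, hmul, hk]
  · simp [hmul, smul_eq_mul, mul_comm]

namespace Derivation

variable {k K L : Type*} [Field k] [Field K] [Algebra k K] (D : Derivation k K K)

theorem repr_rTensor_apply [AddCommGroup L] [Module k L] {ι : Type*} (e : Module.Basis ι k L)
    (r : K ⊗[k] L) (i : ι) :
    (Algebra.TensorProduct.basis K e).repr (D.toLinearMap.rTensor L r) i =
      D ((Algebra.TensorProduct.basis K e).repr r i) := by
  induction r using TensorProduct.induction_on with
  | zero => simp
  | tmul x c => simp [D.leibniz, mul_comm]
  | add r s hr hs => simp only [map_add, Finsupp.add_apply, hr, hs]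

theorem support_repr_rTensor_subset [AddCommGroup L] [Module k L] {ι : Type*} [DecidableEq ι]
    (e : Module.Basis ι k L) {r : K ⊗[k] L} {i₀ : ι}
    (h : (Algebra.TensorProduct.basis K e).repr r i₀ = 1) :
    ((Algebra.TensorProduct.basis K e).repr (D.toLinearMap.rTensor L r)).support ⊆
      ((Algebra.TensorProduct.basis K e).repr r).support.erase i₀ := by
  intro i hi
  rw [Finsupp.mem_support_iff, repr_rTensor_apply] at hi
  refine Finset.mem_erase.mpr ⟨fun hi₀ => hi ?_, Finsupp.mem_support_iff.mpr fun h0 => hi ?_⟩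
  · rw [hi₀, h, map_one_eq_zero]
  · rw [h0, map_zero]

theorem exists_eq_one_tmul_of_rTensor_eq_zero [AddCommGroup L] [Module k L]
    (hD : Function.Exact (algebraMap k K) D) {r : K ⊗[k] L}
    (hr : D.toLinearMap.rTensor L r = 0) : ∃ u : L, r = 1 ⊗ₜ u := by
  obtain ⟨t, rfl⟩ := (Module.Flat.rTensor_exact L (f := Algebra.linearMap k K) hD r).mp hr
  obtain ⟨u, rfl⟩ := (TensorProduct.lid k L).symm.surjective t
  exact ⟨u, by simp⟩

theorem ideal_eq_top_of_rTensor_mem [Field L] [Algebra k L]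
    (hD : Function.Exact (algebraMap k K) D) {I : Ideal (K ⊗[k] L)}
    (hI : ∀ r ∈ I, D.toLinearMap.rTensor L r ∈ I) (hne : I ≠ ⊥) : I = ⊤ := by
  classical
  set b := Algebra.TensorProduct.basis K (Module.Basis.ofVectorSpace k L)
  have hex : ∃ N, ∃ r ∈ I, r ≠ 0 ∧ (b.repr r).support.card = N := by
    obtain ⟨r, hrI, hr0⟩ := (Submodule.ne_bot_iff I).mp hne
    exact ⟨_, r, hrI, hr0, rfl⟩
  obtain ⟨r, hrI, hr0, hcard⟩ := Nat.find_spec hex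
  obtain ⟨i₀, hi₀⟩ := Finsupp.support_nonempty_iff.mpr (b.repr.map_ne_zero_iff.mpr hr0)
  have hx : b.repr r i₀ ≠ 0 := Finsupp.mem_support_iff.mp hi₀
  set r' := (b.repr r i₀)⁻¹ • r
  have hr'I : r' ∈ I := Submodule.smul_of_tower_mem I _ hrI
  have hr'0 : r' ≠ 0 := smul_ne_zero (inv_ne_zero hx) hr0
  have hrepr' : b.repr r' = (b.repr r i₀)⁻¹ • b.repr r := b.repr.map_smul _ _
  have hr'i₀ : b.repr r' i₀ = 1 := by simp [hrepr', inv_mul_cancel₀ hx]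
  have hsupp : (b.repr r').support = (b.repr r).support := by
    rw [hrepr', Finsupp.support_smul_eq (inv_ne_zero hx)]
  have hδr' : D.toLinearMap.rTensor L r' = 0 := by
    by_contra h
    refine Nat.find_min hex ?_ ⟨_, hI _ hr'I, h, rfl⟩
    calc _ ≤ ((b.repr r').support.erase i₀).card :=
          Finset.card_le_card (D.support_repr_rTensor_subset _ hr'i₀)
      _ < (b.repr r').support.card := Finset.card_erase_lt_of_mem (hsupp ▸ hi₀)
      _ = Nat.find hex := by rw [hsupp, hcard]
  obtain ⟨u, hu⟩ := D.exists_eq_one_tmul_of_rTensor_eq_zero hD hδr'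
  have hu0 : u ≠ 0 := by
    rintro rfl
    exact hr'0 (by rw [hu, TensorProduct.tmul_zero])
  refine Ideal.eq_top_of_isUnit_mem I hr'I ?_
  rw [hu, ← Algebra.TensorProduct.includeRight_apply]
  exact hu0.isUnit.map _

theorem apply_map_eq_map_rTensor [CommRing L] [Algebra k L] {F : Type*} [CommRing F]
    (φ : K ⊗[k] L →+* F) {δF : F → F} (hadd : ∀ a b, δF (a + b) = δF a + δF b)
    (hmul : ∀ a b, δF (a * b) = a * δF b + δF a * b)
    (hK : ∀ x : K, δF (φ (x ⊗ₜ 1)) = φ (D x ⊗ₜ 1)) (hL : ∀ c : L, δF (φ (1 ⊗ₜ c)) = 0)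
    (r : K ⊗[k] L) : δF (φ r) = φ (D.toLinearMap.rTensor L r) := by
  induction r using TensorProduct.induction_on with
  | zero => simpa using hadd 0 0
  | tmul x c =>
    have hsplit : ∀ y : K, y ⊗ₜ[k] c = (y ⊗ₜ 1) * (1 ⊗ₜ c) := by simp
    rw [LinearMap.rTensor_tmul, coeFn_coe, hsplit x, hsplit (D x), map_mul, map_mul, hmul, hL, hK]
    ring
  | add r s hr hs => rw [map_add, hadd, hr, hs, map_add, map_add]

variable {n : Type*} [Fintype n] [DecidableEq n]

/-- Gauge transformations from `δ y = A y` to `δ y = M y`. -/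
def gaugeSolutions (A M : Matrix n n K) : Submodule k (Matrix n n K) :=
  LinearMap.ker (D.toLinearMap.mapMatrix + LinearMap.mulRight k A - LinearMap.mulLeft k M)

theorem mem_gaugeSolutions {A M B : Matrix n n K} :
    B ∈ D.gaugeSolutions A M ↔ B.map D + B * A = M * B := by
  simp [gaugeSolutions, sub_eq_zero]

theorem exists_isUnit_gauge_of_tensor [Infinite k] [CommRing L] [Algebra k L]
    {A M : Matrix n n K} {C : Matrix n n (K ⊗[k] L)} (hdet : C.det ≠ 0)
    (hC : C.map (D.toLinearMap.rTensor L) + C * A.map (algebraMap K (K ⊗[k] L)) =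
      M.map (algebraMap K (K ⊗[k] L)) * C) :
    ∃ B : Matrix n n K, IsUnit B ∧ B.map D + B * A = M * B := by
  classical
  set b := Algebra.TensorProduct.basis K (Module.Basis.ofVectorSpace k L)
  set Bc := fun i => C.map (b.coord i)
  have hBc : ∀ i, Bc i ∈ D.gaugeSolutions A M := by
    intro i
    have h := congrArg (Matrix.map · (b.coord i)) hC
    simp only [Matrix.map_add _ (map_add _), Matrix.map_mul_map_algebraMap,
      Matrix.map_map_algebraMap_mul, Matrix.map_map] at h
    rw [mem_gaugeSolutions, ← h, Matrix.map_map]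
    congr 2
    funext r
    exact (D.repr_rTensor_apply _ r i).symm
  set S := Finset.univ.biUnion fun pq : n × n => (b.repr (C pq.1 pq.2)).support
  have hCsum : ∑ i ∈ S, b i • (Bc i).map (algebraMap K (K ⊗[k] L)) = C := by
    ext p q
    simp only [Matrix.sum_apply, Matrix.smul_apply, Matrix.map_apply, Bc,
      Module.Basis.coord_apply, smul_eq_mul, mul_comm (b _), ← Algebra.smul_def]
    have hsub : (b.repr (C p q)).support ⊆ S := fun i hi =>
      Finset.mem_biUnion.mpr ⟨(p, q), Finset.mem_univ _, hi⟩
    conv_rhs => rw [← b.linearCombination_repr (C p q), Finsupp.linearCombination_apply]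
    rw [Finsupp.sum_of_support_subset _ hsub _ fun i _ => zero_smul K (b i)]
  obtain ⟨c, hc⟩ := Matrix.exists_det_sum_smul_ne_zero (k := k) S Bc (fun i => b i)
    (by rwa [hCsum])
  exact ⟨_, (Matrix.isUnit_iff_isUnit_det _).mpr hc.isUnit, (mem_gaugeSolutions D).mp
    (Submodule.sum_mem _ fun i _ => Submodule.smul_mem _ _ (hBc i))⟩

theorem exists_isUnit_gauge_iff [Infinite k] [Field L] [Algebra k L]
    (hD : Function.Exact (algebraMap k K) D)
    {δF : FractionRing (K ⊗[k] L) → FractionRing (K ⊗[k] L)}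
    (hadd : ∀ a b, δF (a + b) = δF a + δF b) (hmul : ∀ a b, δF (a * b) = a * δF b + δF a * b)
    (hK : ∀ x : K, δF (algebraMap _ _ (x ⊗ₜ[k] (1 : L))) = algebraMap _ _ (D x ⊗ₜ[k] (1 : L)))
    (hL : ∀ c : L, δF (algebraMap _ _ ((1 : K) ⊗ₜ[k] c)) = 0) (A M : Matrix n n K) :
    (∃ B : Matrix n n K, IsUnit B ∧ B.map D + B * A = M * B) ↔
      ∃ Bt : Matrix n n (FractionRing (K ⊗[k] L)), IsUnit Bt ∧
        Bt.map δF + Bt * A.map (algebraMap K (FractionRing (K ⊗[k] L))) =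
          M.map (algebraMap K (FractionRing (K ⊗[k] L))) * Bt := by
  constructor
  · rintro ⟨B, hBu, hB⟩
    exact ⟨_, hBu.map (algebraMap K _).mapMatrix, Matrix.map_gauge _ hK hB⟩
  · rintro ⟨Bt, hBu, hB⟩
    have : Nontrivial (K ⊗[k] L) :=
      Algebra.TensorProduct.nontrivial_of_algebraMap_injective_of_flat_right k K L
        (algebraMap k K).injective
    obtain ⟨C, hdet, hC⟩ := IsFractionRing.exists_det_ne_zero_gauge
      (A := A.map (algebraMap K _)) (M := M.map (algebraMap K _)) hmul
      (D.apply_map_eq_map_rTensor (algebraMap _ _) hadd hmul hK hL)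
      (fun I hI hne => D.ideal_eq_top_of_rTensor_mem hD hI hne) hBu hB
    exact D.exists_isUnit_gauge_of_tensor hdet hC

end Derivation

theorem stmt_12_general {k K kt : Type*} [Field k] [Field K] [Field kt] [CharZero K]
    [Algebra k K] [Algebra k kt]
    (δK : K → K) (σK : K →+* K) (ℏ : K)
    (hδadd : ∀ a b : K, δK (a + b) = δK a + δK b)
    (hδmul : ∀ a b : K, δK (a * b) = a * δK b + δK a * b)
    (hconst : ∀ a : K, δK a = 0 ↔ ∃ c : k, algebraMap k K c = a)
    (δt : FractionRing (TensorProduct k K kt) → FractionRing (TensorProduct k K kt))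
    (hδtadd : ∀ a b, δt (a + b) = δt a + δt b)
    (hδtmul : ∀ a b, δt (a * b) = a * δt b + δt a * b)
    (hδtK : ∀ x : K, δt (stmt12ιK (kt := kt) x) = stmt12ιK (kt := kt) (δK x))
    (hδtk : ∀ c : kt, δt (stmt12ιc (K := K) c) = 0)
    (n : ℕ) (A : Matrix (Fin n) (Fin n) K) (d : ℕ) :
    (∃ B : Matrix (Fin n) (Fin n) K, IsUnit B ∧
        B.map δK + B * A = hbarSeq σK ℏ d • (A.map ((⇑σK)^[d])) * B) ↔
    (∃ Bt : Matrix (Fin n) (Fin n) (FractionRing (TensorProduct k K kt)), IsUnit Bt ∧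
        Bt.map δt + Bt * A.map (stmt12ιK (kt := kt)) =
          stmt12ιK (k := k) (kt := kt) (hbarSeq σK ℏ d) •
            ((A.map ((⇑σK)^[d])).map (stmt12ιK (kt := kt))) * Bt) := by
  obtain ⟨D, rfl⟩ := Derivation.exists_coe_eq δK hδadd hδmul fun c => (hconst _).mpr ⟨c, rfl⟩
  have : CharZero k := (algebraMap k K).charZero
  have hι : ∀ x y : K, stmt12ιK (k := k) (kt := kt) (x * y) = stmt12ιK x * stmt12ιK y :=
    map_mul (algebraMap K (FractionRing (K ⊗[k] kt)))
  rw [← Matrix.map_smul' _ _ _ hι]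
  exact D.exists_isUnit_gauge_iff hconst hδtadd hδtmul hδtK hδtk A _

/-- descent of σ^d-integrability along a constant field extension.
Let `K` be a δσ-field of characteristic zero with constants `k = K^δ`, `A ∈ K^{n×n}`,
`d ≥ 1`, `k̃` a field extension of `k` with `K ⊗_k k̃` a domain, and `K̃` its fraction
field with derivation `δ̃` extending `δ` and vanishing on `k̃`.  Then `δ(y) = A·y` is
σ^d-integrable over `K` (∃ `B ∈ GLₙ(K)` with `δ(B) + B·A = ℏ_d·σ^d(A)·B`) iff there is
`B̃ ∈ GLₙ(K̃)` with `δ̃(B̃) + B̃·A = ℏ_d·σ^d(A)·B̃`. -/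
theorem stmt_12 {k K kt : Type*} [Field k] [Field K] [Field kt] [CharZero K]
    [Algebra k K] [Algebra k kt]
    [IsDomain (TensorProduct k K kt)]
    (δK : K → K) (σK : K →+* K) (ℏ : K)
    (hδadd : ∀ a b : K, δK (a + b) = δK a + δK b)
    (hδmul : ∀ a b : K, δK (a * b) = a * δK b + δK a * b)
    (hℏ0 : ℏ ≠ 0) (hδℏ : δK ℏ = 0)
    (hcommK : ∀ r : K, δK (σK r) = ℏ * σK (δK r))
    (hconst : ∀ a : K, δK a = 0 ↔ ∃ c : k, algebraMap k K c = a)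
    (δt : FractionRing (TensorProduct k K kt) → FractionRing (TensorProduct k K kt))
    (hδtadd : ∀ a b, δt (a + b) = δt a + δt b)
    (hδtmul : ∀ a b, δt (a * b) = a * δt b + δt a * b)
    (hδtK : ∀ x : K, δt (stmt12ιK (kt := kt) x) = stmt12ιK (kt := kt) (δK x))
    (hδtk : ∀ c : kt, δt (stmt12ιc (K := K) c) = 0)
    (n : ℕ) (A : Matrix (Fin n) (Fin n) K) (d : ℕ) (hd : 1 ≤ d) :
    (∃ B : Matrix (Fin n) (Fin n) K, IsUnit B ∧
        B.map δK + B * A = hbarSeq σK ℏ d • (A.map ((⇑σK)^[d])) * B) ↔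
    (∃ Bt : Matrix (Fin n) (Fin n) (FractionRing (TensorProduct k K kt)), IsUnit Bt ∧
        Bt.map δt + Bt * A.map (stmt12ιK (kt := kt)) =
          stmt12ιK (k := k) (kt := kt) (hbarSeq σK ℏ d) •
            ((A.map ((⇑σK)^[d])).map (stmt12ιK (kt := kt))) * Bt) :=
  stmt_12_general δK σK ℏ hδadd hδmul hconst δt hδtadd hδtmul hδtK hδtk n A d
end

section
/- Let k be a field equipped with a ring endomorphism σ, and suppose k is linearly σ-closed: for every n ≥ 1 and every B ∈ GLₙ(k) there exists Y ∈ GLₙ(k) with σ(Y) = B·Y (σ applied entrywise). Then for every integer d ≥ 1, the field k is linearly σ^d-closed: for every n ≥ 1 and every B ∈ GLₙ(k) there exists Y ∈ GLₙ(k) with σ^d(Y) = B·Y. -/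
/-!
Given `B`, solve the `σ`-system of size `d n` whose matrix is block-cyclic with blocks
`1, …, 1, B`: the block rows `Z₀, …, Z_{d-1}` of a fundamental matrix satisfy `σ(Zᵢ) = Zᵢ₊₁`
and `σ(Z_{d-1}) = B Z₀`, so `W = Z₀` satisfies `σ^d(W) = B W`. Being a block row of an
invertible matrix, `W` has full row rank, and any `n` linearly independent columns of `W` form
a fundamental matrix of `σ^d(Y) = B Y`.
-/

open Matrix

theorem Matrix.exists_isUnit_submatrix_of_linearIndependent_row {k m ι : Type*} [Field k]
    [Fintype m] [DecidableEq m] [Fintype ι] {W : Matrix m ι k} (h : LinearIndependent k W.row) :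
    ∃ φ : m → ι, IsUnit (W.submatrix id φ) := by
  have hspan : Submodule.span k (Set.range W.col) = ⊤ := Submodule.eq_top_of_finrank_eq <| by
    rw [← rank_eq_finrank_span_cols, h.rank_matrix, Module.finrank_fintype_fun_eq_card]
  obtain ⟨κ, a, -, hspan', hli⟩ := exists_linearIndependent' k W.col
  let g := (Pi.basisFun k m).indexEquiv (Module.Basis.mk hli (by rw [hspan', hspan]))
  refine ⟨a ∘ g, ?_⟩
  rw [← linearIndependent_cols_iff_isUnit]
  exact hli.comp g g.injective

theorem Fin.iterate_apply_zero_eq_of_castSucc_succ {α : Type*} {e : ℕ} (τ : α → α)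
    (f : Fin (e + 1) → α) (h : ∀ i : Fin e, τ (f i.castSucc) = f i.succ) (i : Fin (e + 1)) :
    τ^[i] (f 0) = f i := by
  induction i using Fin.induction with
  | zero => rfl
  | succ i ih => rw [Fin.val_succ, Function.iterate_succ_apply', ← Fin.val_castSucc, ih, h]

/-- The block matrix whose block in position `(i, i + 1 mod d)` is `M i`, all other blocks
being zero; as for `blockDiagonal`, the block index is the second component. -/
def Matrix.cyclicBlock {k ι : Type*} [Zero k] {d : ℕ} (M : Fin d → Matrix ι ι k) :
    Matrix (ι × Fin d) (ι × Fin d) k :=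
  (blockDiagonal M).submatrix id (Equiv.prodCongr (Equiv.refl ι) (finRotate d).symm)

theorem Matrix.cyclicBlock_mul_submatrix {k ι κ : Type*} [Semiring k] [Fintype ι] {d : ℕ}
    (M : Fin d → Matrix ι ι k) (Z : Matrix (ι × Fin d) κ k) (i : Fin d) :
    (cyclicBlock M * Z).submatrix (·, i) id = M i * Z.submatrix (·, finRotate d i) id := by
  ext a q
  simp only [cyclicBlock, submatrix_apply, mul_apply]
  rw [← (Equiv.prodCongr (Equiv.refl ι) (finRotate d)).sum_comp, Fintype.sum_prod_type]
  simp only [Equiv.prodCongr_apply, Prod.map, Equiv.coe_refl, id, Equiv.symm_apply_apply,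
    blockDiagonal_apply', ite_mul, zero_mul, Finset.sum_ite_eq, Finset.mem_univ, if_true]

theorem Matrix.isUnit_cyclicBlock {k ι : Type*} [CommRing k] [Fintype ι] [DecidableEq ι] {d : ℕ}
    {M : Fin d → Matrix ι ι k} (hM : ∀ i, IsUnit (M i)) : IsUnit (cyclicBlock M) := by
  rw [cyclicBlock, ← Equiv.coe_refl, isUnit_submatrix_equiv]
  exact (Pi.isUnit_iff.mpr hM).map (blockDiagonalRingHom ι (Fin d) k)

def HasFundamentalMatrices {k : Type*} [Semiring k] (τ : k → k) (ι : Type*) [Fintype ι]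
    [DecidableEq ι] : Prop :=
  ∀ B : Matrix ι ι k, IsUnit B → ∃ Y : Matrix ι ι k, IsUnit Y ∧ Y.map τ = B * Y

namespace HasFundamentalMatrices

theorem of_equiv {k ι κ : Type*} [CommRing k] [Fintype ι] [DecidableEq ι] [Fintype κ]
    [DecidableEq κ] {τ : k → k} (h : HasFundamentalMatrices τ ι) (e : ι ≃ κ) :
    HasFundamentalMatrices τ κ := by
  intro B hB
  obtain ⟨Y, hY, hYτ⟩ := h (B.submatrix e e) ((isUnit_submatrix_equiv e e).mpr hB)
  refine ⟨Y.submatrix e.symm e.symm, (isUnit_submatrix_equiv _ _).mpr hY, ?_⟩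
  rw [← submatrix_map, hYτ, ← submatrix_mul_equiv _ _ _ e.symm, submatrix_submatrix]
  simp

theorem iterate_succ {k ι : Type*} [Field k] [Fintype ι] [DecidableEq ι] {τ : k → k} {e : ℕ}
    (h : HasFundamentalMatrices τ (ι × Fin (e + 1))) : HasFundamentalMatrices τ^[e + 1] ι := by
  intro B hB
  let M : Fin (e + 1) → Matrix ι ι k := Fin.lastCases B fun _ ↦ 1
  have hM : ∀ i, IsUnit (M i) := Fin.lastCases (by simpa [M]) fun _ ↦ by simp [M]
  obtain ⟨Z, hZ, hZτ⟩ := h _ (isUnit_cyclicBlock hM)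
  have hblock (i : Fin (e + 1)) :
      (Z.submatrix (·, i) id).map τ = M i * Z.submatrix (·, finRotate _ i) id := by
    rw [← submatrix_map, hZτ, cyclicBlock_mul_submatrix]
  set W : Matrix ι (ι × Fin (e + 1)) k := Z.submatrix (·, 0) id
  have hW : W.map τ^[e] = Z.submatrix (·, Fin.last e) id := by
    ext a q
    have hstep (i : Fin e) : τ (Z (a, i.castSucc) q) = Z (a, i.succ) q := by
      simpa [M] using congrFun₂ (hblock i.castSucc) a q
    simpa [W] using Fin.iterate_apply_zero_eq_of_castSucc_succ τ (fun i ↦ Z (a, i) q) hstep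
      (Fin.last e)
  have hWτ : W.map τ^[e + 1] = B * W := by
    rw [Function.iterate_succ', ← map_map, hW, hblock]
    simp [M, W]
  obtain ⟨φ, hφ⟩ := exists_isUnit_submatrix_of_linearIndependent_row (W := W)
    ((linearIndependent_rows_iff_isUnit.mpr hZ).comp _ fun a b h ↦ (Prod.ext_iff.mp h).1)
  refine ⟨W.submatrix id φ, hφ, ?_⟩
  rw [← submatrix_map, hWτ, submatrix_mul _ _ _ _ _ Function.bijective_id, submatrix_id_id]

end HasFundamentalMatrices

/-- a linearly σ-closed σ-field is linearly σ^d-closed for every `d ≥ 1`: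
if every linear difference system `σ(Y) = B·Y` over `k` has a fundamental solution
matrix in `k`, then so does every system `σ^d(Y) = B·Y`. -/
theorem stmt_13 {k : Type*} [Field k] (σ : k →+* k)
    (hclosed : ∀ (n : ℕ), 1 ≤ n → ∀ B : Matrix (Fin n) (Fin n) k, IsUnit B →
      ∃ Y : Matrix (Fin n) (Fin n) k, IsUnit Y ∧ Y.map ⇑σ = B * Y)
    (d : ℕ) (hd : 1 ≤ d) :
    ∀ (n : ℕ), 1 ≤ n → ∀ B : Matrix (Fin n) (Fin n) k, IsUnit B →
      ∃ Y : Matrix (Fin n) (Fin n) k, IsUnit Y ∧ Y.map ((⇑σ)^[d]) = B * Y := by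
  obtain ⟨e, rfl⟩ := Nat.exists_eq_add_of_le' hd
  intro n hn
  have hblocks : HasFundamentalMatrices σ (Fin ((e + 1) * n)) :=
    hclosed _ (Nat.mul_pos e.succ_pos hn)
  exact (hblocks.of_equiv (finProdFinEquiv.symm.trans (Equiv.prodComm _ _))).iterate_succ
end

section
/- Let f : ℂ → ℂ be meromorphic at every point of ℂ. Suppose f is algebraic over the field ℂ(x) of rational functions: there exist an integer n ≥ 1, rational functions c₀,…,c_{n−1} ∈ ℂ(X), and a closed subset E ⊂ ℂ with no accumulation point in ℂ (containing the poles of the c_i) such that f(z)^n + Σ_{i=0}^{n−1} c_i(z)·f(z)^i = 0 for all z ∈ ℂ∖E. Then f is rational: there exist a rational function r ∈ ℂ(X) and a closed subset D ⊂ ℂ with no accumulation point in ℂ such that f(z) = r(z) for all z ∈ ℂ∖D. -/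
/-!
Clearing denominators, `g := q · f` (with `q` the product of the denominators of the `cᵢ`) is a
root of a monic polynomial with polynomial coefficients `pᵢ`, so by Cauchy's root bound
`‖g‖ ≤ 1 + Σ ‖pᵢ‖` off `E`. A meromorphic function that is locally bounded has only removable
singularities, so `g` agrees off a discrete set with an entire function of polynomial growth,
which is a polynomial `P` by Liouville's theorem applied to iterated difference quotients.
Hence `f = P / q` off a discrete set.
-/

open Filter Topology Polynomial

section Codiscrete

variable {X : Type*} [TopologicalSpace X]

theorem nhdsNE_le_codiscrete (x : X) : 𝓝[≠] x ≤ codiscrete X := fun _ hS ↦ by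
  simpa using mem_codiscreteWithin_iff_forall_mem_nhdsNE.1 hS x (Set.mem_univ x)

theorem exists_isClosed_forall_not_accPt_of_eventually_codiscrete {p : X → Prop}
    (h : ∀ᶠ x in codiscrete X, p x) :
    ∃ D : Set X, IsClosed D ∧ (∀ x, ¬AccPt x (𝓟 D)) ∧ ∀ x ∉ D, p x :=
  ⟨{x | p x}ᶜ, (mem_codiscrete'.1 h).1.isClosed_compl, mem_codiscrete_accPt.1 h,
    fun _ hx ↦ not_not.1 hx⟩

theorem le_of_eventually_le_codiscrete [∀ x : X, (𝓝[≠] x).NeBot] {α : Type*} [Preorder α]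
    [TopologicalSpace α] [OrderClosedTopology α] {u v : X → α} (hu : Continuous u)
    (hv : Continuous v) (h : ∀ᶠ x in codiscrete X, u x ≤ v x) (x : X) : u x ≤ v x :=
  le_of_tendsto_of_tendsto ((hu.tendsto x).mono_left nhdsWithin_le_nhds)
    ((hv.tendsto x).mono_left nhdsWithin_le_nhds) (h.filter_mono (nhdsNE_le_codiscrete x))

end Codiscrete

theorem norm_le_one_add_sum_norm_of_pow_add_sum_eq_zero {K : Type*} [NormedDivisionRing K]
    {n : ℕ} {x : K} {a : Fin n → K} (h : x ^ n + ∑ i, a i * x ^ (i : ℕ) = 0) :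
    ‖x‖ ≤ 1 + ∑ i, ‖a i‖ := by
  cases n with
  | zero => simp at h
  | succ m =>
    by_contra! hx
    have hS : 0 ≤ ∑ i, ‖a i‖ := Finset.sum_nonneg fun i _ ↦ norm_nonneg _
    have hx1 : 1 ≤ ‖x‖ := by linarith
    have key : ‖x‖ ^ m * ‖x‖ ≤ ‖x‖ ^ m * ∑ i, ‖a i‖ := by
      calc ‖x‖ ^ m * ‖x‖ = ‖∑ i, a i * x ^ (i : ℕ)‖ := by
            rw [← pow_succ, ← norm_pow, eq_neg_of_add_eq_zero_left h, norm_neg]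
        _ ≤ ∑ i, ‖a i‖ * ‖x‖ ^ m := by
            refine (norm_sum_le _ _).trans (Finset.sum_le_sum fun i _ ↦ ?_)
            rw [norm_mul, norm_pow]
            gcongr
            exact Nat.lt_succ_iff.1 i.isLt
        _ = ‖x‖ ^ m * ∑ i, ‖a i‖ := by rw [← Finset.sum_mul, mul_comm]
    have hxS : ‖x‖ ≤ ∑ i, ‖a i‖ := le_of_mul_le_mul_left key (pow_pos (by linarith) m)
    linarith

theorem mul_pow_add_sum_eq_zero_of_pow_add_sum_eq_zero {R : Type*} [CommRing R] {n : ℕ}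
    {x : R} {a : Fin n → R} (h : x ^ n + ∑ i, a i * x ^ (i : ℕ) = 0) (s : R) :
    (s * x) ^ n + ∑ i : Fin n, s ^ (n - (i : ℕ)) * a i * (s * x) ^ (i : ℕ) = 0 := by
  have hterm (i : Fin n) :
      s ^ (n - (i : ℕ)) * a i * (s * x) ^ (i : ℕ) = s ^ n * (a i * x ^ (i : ℕ)) := by
    rw [mul_pow, ← pow_sub_mul_pow s i.isLt.le]
    ring
  calc _ = s ^ n * (x ^ n + ∑ i, a i * x ^ (i : ℕ)) := by
        rw [mul_add, Finset.mul_sum, mul_pow]; simp only [hterm]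
    _ = 0 := by rw [h, mul_zero]

universe u

namespace RatFunc

variable {K L : Type u} [Field K] [Field L] (f : K →+* L)

theorem exists_eval_mul_eq_eval₂_of_denom_dvd (c : RatFunc K) {Q : K[X]} (hQ : c.denom ∣ Q) :
    ∃ p : K[X], ∀ a : L, c.denom.eval₂ f a ≠ 0 → Q.eval₂ f a * c.eval f a = p.eval₂ f a := by
  obtain ⟨t, rfl⟩ := hQ
  refine ⟨c.num * t, fun a ha ↦ ?_⟩
  rw [eval, eval₂_mul, eval₂_mul]
  field_simp

theorem eval_algebraMap_div_algebraMap {P Q : K[X]} {a : L} (ha : Q.eval₂ f a ≠ 0) :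
    eval f a (algebraMap K[X] (RatFunc K) P / algebraMap K[X] (RatFunc K) Q) =
      P.eval₂ f a / Q.eval₂ f a := by
  set r := algebraMap K[X] (RatFunc K) P / algebraMap K[X] (RatFunc K) Q
  have hQ : Q ≠ 0 := by rintro rfl; simp at ha
  have hcross : r.num * Q = P * r.denom := (num_mul_eq_mul_denom_iff hQ).2 rfl
  have hr : r.denom.eval₂ f a ≠ 0 := by
    obtain ⟨s, hs⟩ := denom_div_dvd P Q
    intro h
    rw [hs, eval₂_mul, h, zero_mul] at ha
    exact ha rfl
  rw [eval, div_eq_div_iff hr ha, ← eval₂_mul, ← eval₂_mul, hcross]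

end RatFunc

theorem RatFunc.exists_norm_eval_mul_le_of_pow_add_sum_eq_zero {K : Type*} [NormedField K]
    {f : K → K} {n : ℕ} {c : Fin n → RatFunc K} {E : Set K}
    (hpoles : ∀ (i : Fin n) (z : K), (c i).denom.eval z = 0 → z ∈ E)
    (heq : ∀ z ∉ E, f z ^ n + ∑ i : Fin n, (c i).eval (RingHom.id K) z * f z ^ (i : ℕ) = 0) :
    ∃ (q : K[X]) (p : Fin n → K[X]), (∀ z ∉ E, q.eval z ≠ 0) ∧
      ∀ z ∉ E, ‖q.eval z * f z‖ ≤ 1 + ∑ i, ‖(p i).eval z‖ := by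
  set q : K[X] := ∏ i, (c i).denom
  have hdvd (i : Fin n) : (c i).denom ∣ q ^ (n - (i : ℕ)) :=
    (Finset.dvd_prod_of_mem (fun j ↦ (c j).denom) (Finset.mem_univ i)).trans
      (dvd_pow_self q (by omega))
  choose p hp using fun i ↦ (c i).exists_eval_mul_eq_eval₂_of_denom_dvd (RingHom.id K) (hdvd i)
  refine ⟨q, p, fun z hz ↦ ?_, fun z hz ↦ ?_⟩
  · simp only [q, eval_prod, Finset.prod_ne_zero_iff]
    exact fun i _ h ↦ hz (hpoles i z h)
  · have hcoef (i : Fin n) :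
        q.eval z ^ (n - (i : ℕ)) * (c i).eval (RingHom.id K) z = (p i).eval z := by
      simpa only [eval₂_id, eval_pow] using hp i z (fun h ↦ hz (hpoles i z h))
    simpa only [hcoef] using norm_le_one_add_sum_norm_of_pow_add_sum_eq_zero
      (mul_pow_add_sum_eq_zero_of_pow_add_sum_eq_zero (heq z hz) (q.eval z))

theorem Polynomial.exists_norm_eval_le_mul_one_add_norm_pow {K : Type*} [NormedField K]
    (p : K[X]) {N : ℕ} (hN : p.natDegree ≤ N) :
    ∃ C : ℝ, ∀ z : K, ‖p.eval z‖ ≤ C * (1 + ‖z‖) ^ N := by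
  refine ⟨∑ k ∈ Finset.range (p.natDegree + 1), ‖p.coeff k‖, fun z ↦ ?_⟩
  have h1 : 1 ≤ 1 + ‖z‖ := le_add_of_nonneg_right (norm_nonneg z)
  rw [eval_eq_sum_range, Finset.sum_mul]
  refine (norm_sum_le _ _).trans (Finset.sum_le_sum fun k hk ↦ ?_)
  rw [norm_mul, norm_pow]
  gcongr
  calc ‖z‖ ^ k ≤ (1 + ‖z‖) ^ k := by gcongr; exact le_add_of_nonneg_left zero_le_one
    _ ≤ (1 + ‖z‖) ^ N := pow_le_pow_right₀ h1 (by rw [Finset.mem_range] at hk; omega)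

theorem Polynomial.exists_one_add_sum_norm_eval_le {K : Type*} [NormedField K] {ι : Type*}
    (s : Finset ι) (p : ι → K[X]) :
    ∃ (C : ℝ) (N : ℕ), ∀ z : K, 1 + ∑ i ∈ s, ‖(p i).eval z‖ ≤ C * (1 + ‖z‖) ^ N := by
  classical
  set N := s.sup fun i ↦ (p i).natDegree
  choose C hC using fun i : s ↦ (p i).exists_norm_eval_le_mul_one_add_norm_pow
    (Finset.le_sup (f := fun i ↦ (p i).natDegree) i.2)
  refine ⟨1 + ∑ i, C i, N, fun z ↦ ?_⟩
  rw [add_mul, one_mul, Finset.sum_mul, ← Finset.sum_coe_sort s]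
  gcongr with i
  · exact one_le_pow₀ (le_add_of_nonneg_right (norm_nonneg z))
  · exact hC i z

theorem MeromorphicOn.exists_analyticOnNhd_eventuallyEq_of_isBoundedUnder
    {𝕜 E : Type*} [NontriviallyNormedField 𝕜] [NormedAddCommGroup E] [NormedSpace 𝕜 E]
    {g : 𝕜 → E} {U : Set 𝕜} (hg : MeromorphicOn g U)
    (hb : ∀ x ∈ U, IsBoundedUnder (· ≤ ·) (𝓝[≠] x) (‖g ·‖)) :
    ∃ G : 𝕜 → E, AnalyticOnNhd 𝕜 G U ∧ g =ᶠ[codiscreteWithin U] G := by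
  refine ⟨toMeromorphicNFOn g U, fun x hx ↦ ?_, toMeromorphicNFOn_eqOn_codiscrete hg⟩
  refine (meromorphicNFOn_toMeromorphicNFOn g U hx).meromorphicOrderAt_nonneg_iff_analyticAt.1 ?_
  rw [meromorphicOrderAt_congr (hg.toMeromorphicNFOn_eq_self_on_nhdsNE hx)]
  by_contra! hneg
  exact not_isBoundedUnder_of_tendsto_atTop (tendsto_norm_atTop_iff_cobounded.2
    (tendsto_cobounded_of_meromorphicOrderAt_neg hneg)) (hb x hx)

theorem Complex.differentiable_dslope {g : ℂ → ℂ} {a : ℂ} :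
    Differentiable ℂ (dslope g a) ↔ Differentiable ℂ g := by
  simpa only [differentiableOn_univ] using Complex.differentiableOn_dslope (c := a) univ_mem

theorem Differentiable.exists_norm_dslope_le {g : ℂ → ℂ} (hg : Differentiable ℂ g) {C : ℝ}
    {N : ℕ} (hb : ∀ z, ‖g z‖ ≤ C * (1 + ‖z‖) ^ (N + 1)) :
    ∃ C' : ℝ, ∀ z, ‖dslope g 0 z‖ ≤ C' * (1 + ‖z‖) ^ N := by
  obtain ⟨M, hM⟩ := (isCompact_closedBall (0 : ℂ) 1).exists_bound_of_continuousOn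
    (Complex.differentiable_dslope.2 hg).continuous.continuousOn
  have hM0 : 0 ≤ M := (norm_nonneg _).trans (hM 0 (by simp))
  have hC : 0 ≤ C := by simpa using (norm_nonneg _).trans (hb 0)
  refine ⟨M + 3 * C, fun z ↦ ?_⟩
  set A := (1 + ‖z‖) ^ N
  have hA : 1 ≤ A := one_le_pow₀ (le_add_of_nonneg_right (norm_nonneg z))
  rcases le_or_gt ‖z‖ 1 with hz | hz
  · have hMz := hM z (by simpa using hz)
    nlinarith [mul_nonneg hC (by linarith : (0:ℝ) ≤ A)]
  · have hz0 : z ≠ 0 := norm_pos_iff.1 (by linarith)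
    -- `(1 + ‖z‖) ≤ 2 ‖z‖` turns the growth exponent `N + 1` of `g` into `N` for `(g z - g 0) / z`
    have hgz : ‖g z - g 0‖ ≤ 3 * C * A * ‖z‖ := by
      have h0 := hb 0
      have h1 := hb z
      simp only [norm_zero, add_zero, one_pow, mul_one] at h0
      rw [pow_succ, ← mul_assoc] at h1
      calc ‖g z - g 0‖ ≤ ‖g z‖ + ‖g 0‖ := norm_sub_le _ _
        _ ≤ C * A * (1 + ‖z‖) + C := add_le_add h1 h0
        _ ≤ 3 * C * A * ‖z‖ := by nlinarith [mul_nonneg hC (by linarith : (0:ℝ) ≤ A - 1)]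
    rw [dslope_of_ne _ hz0, slope_def_field, sub_zero, norm_div, div_le_iff₀ (by linarith)]
    nlinarith [mul_nonneg (mul_nonneg hM0 (by linarith : (0:ℝ) ≤ A)) (norm_nonneg z)]

theorem Differentiable.exists_eq_eval_of_norm_le {g : ℂ → ℂ} (hg : Differentiable ℂ g) {C : ℝ}
    {N : ℕ} (hb : ∀ z, ‖g z‖ ≤ C * (1 + ‖z‖) ^ N) : ∃ P : ℂ[X], ∀ z, g z = P.eval z := by
  induction N generalizing g C with
  | zero =>
    obtain ⟨c, hc⟩ := hg.exists_eq_const_of_bounded (isBounded_iff_forall_norm_le.2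
      ⟨C, by rintro _ ⟨z, rfl⟩; simpa using hb z⟩)
    exact ⟨Polynomial.C c, fun z ↦ by simp [hc]⟩
  | succ N ih =>
    obtain ⟨C', hC'⟩ := hg.exists_norm_dslope_le hb
    obtain ⟨P, hP⟩ := ih (Complex.differentiable_dslope.2 hg) hC'
    refine ⟨Polynomial.C (g 0) + X * P, fun z ↦ ?_⟩
    rw [eval_add, eval_C, eval_mul, eval_X, ← hP, ← sub_eq_iff_eq_add']
    simpa using (sub_smul_dslope g 0 z).symm

theorem MeromorphicOn.exists_eventuallyEq_eval_of_eventually_norm_le {g : ℂ → ℂ}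
    (hg : MeromorphicOn g Set.univ) {φ : ℂ → ℝ} (hφ : Continuous φ)
    (hgφ : ∀ᶠ z in codiscrete ℂ, ‖g z‖ ≤ φ z) {C : ℝ} {N : ℕ}
    (hφC : ∀ z, φ z ≤ C * (1 + ‖z‖) ^ N) :
    ∃ P : ℂ[X], g =ᶠ[codiscrete ℂ] fun z ↦ P.eval z := by
  have hgb (z : ℂ) : IsBoundedUnder (· ≤ ·) (𝓝[≠] z) (‖g ·‖) := by
    refine ⟨φ z + 1, eventually_map.2 ?_⟩
    filter_upwards [hgφ.filter_mono (nhdsNE_le_codiscrete z), ((hφ.tendsto z).mono_left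
      nhdsWithin_le_nhds).eventually_lt_const (lt_add_one (φ z))] with w hwg hwφ
    exact hwg.trans hwφ.le
  obtain ⟨G, hG, hgG⟩ := hg.exists_analyticOnNhd_eventuallyEq_of_isBoundedUnder fun z _ ↦ hgb z
  have hGd : Differentiable ℂ G := differentiableOn_univ.1 hG.differentiableOn
  have hGφ : ∀ z, ‖G z‖ ≤ φ z := le_of_eventually_le_codiscrete hGd.continuous.norm hφ <| by
    filter_upwards [hgφ, hgG] with z hzφ hzG
    exact hzG ▸ hzφ
  obtain ⟨P, hP⟩ := hGd.exists_eq_eval_of_norm_le fun z ↦ (hGφ z).trans (hφC z)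
  exact ⟨P, hgG.trans (Eventually.of_forall hP)⟩

theorem stmt_15_general (f : ℂ → ℂ)
    (hf : ∀ z : ℂ, MeromorphicAt f z)
    (n : ℕ) (c : Fin n → RatFunc ℂ)
    (E : Set ℂ)
    (hEacc : ∀ z : ℂ, ¬ AccPt z (Filter.principal E))
    (hpoles : ∀ (i : Fin n) (z : ℂ), Polynomial.eval z (c i).denom = 0 → z ∈ E)
    (heq : ∀ z ∉ E,
      f z ^ n + ∑ i : Fin n, RatFunc.eval (RingHom.id ℂ) z (c i) * f z ^ (i : ℕ) = 0) :
    ∃ (r : RatFunc ℂ) (D : Set ℂ), IsClosed D ∧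
      (∀ z : ℂ, ¬ AccPt z (Filter.principal D)) ∧
      ∀ z ∉ D, f z = RatFunc.eval (RingHom.id ℂ) z r := by
  have hE : ∀ᶠ z in codiscrete ℂ, z ∉ E :=
    mem_codiscrete_accPt.2 (by simpa [← Set.compl_def] using hEacc)
  obtain ⟨q, p, hq, hqf⟩ := RatFunc.exists_norm_eval_mul_le_of_pow_add_sum_eq_zero hpoles heq
  obtain ⟨C, N, hC⟩ := Polynomial.exists_one_add_sum_norm_eval_le Finset.univ p
  obtain ⟨P, hP⟩ := MeromorphicOn.exists_eventuallyEq_eval_of_eventually_norm_le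
    (g := fun z ↦ q.eval z * f z)
    (fun z _ ↦ (q.differentiable.analyticAt z).meromorphicAt.mul (hf z)) (by fun_prop)
    (hE.mono hqf) hC
  refine ⟨algebraMap ℂ[X] (RatFunc ℂ) P / algebraMap ℂ[X] (RatFunc ℂ) q,
    exists_isClosed_forall_not_accPt_of_eventually_codiscrete ?_⟩
  filter_upwards [hE, hP] with z hzE hzP
  rw [RatFunc.eval_algebraMap_div_algebraMap _ (hq z hzE), eval₂_id, eval₂_id, ← hzP,
    eq_div_iff (hq z hzE), mul_comm]

/-- `ℂ(x)` is relatively algebraically closed in the field of meromorphic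
functions on `ℂ`.  If `f : ℂ → ℂ` is meromorphic at every point and satisfies a monic
algebraic equation `f^n + Σ cᵢ·f^i = 0` with coefficients `cᵢ ∈ ℂ(X)` away from a closed
set `E` with no accumulation point (containing the poles of the `cᵢ`), then `f` agrees
with a rational function away from some closed set with no accumulation point. -/
theorem stmt_15 (f : ℂ → ℂ)
    (hf : ∀ z : ℂ, MeromorphicAt f z)
    (n : ℕ) (hn : 1 ≤ n) (c : Fin n → RatFunc ℂ)
    (E : Set ℂ) (hEclosed : IsClosed E)
    (hEacc : ∀ z : ℂ, ¬ AccPt z (Filter.principal E))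
    (hpoles : ∀ (i : Fin n) (z : ℂ), Polynomial.eval z (c i).denom = 0 → z ∈ E)
    (heq : ∀ z ∉ E,
      f z ^ n + ∑ i : Fin n, RatFunc.eval (RingHom.id ℂ) z (c i) * f z ^ (i : ℕ) = 0) :
    ∃ (r : RatFunc ℂ) (D : Set ℂ), IsClosed D ∧
      (∀ z : ℂ, ¬ AccPt z (Filter.principal D)) ∧
      ∀ z ∉ D, f z = RatFunc.eval (RingHom.id ℂ) z r :=
  stmt_15_general f hf n c E hEacc hpoles heq
end

section
/- Let p be a prime number, let l ∈ ℕ, and let α₀, α₁, …, α_l ∈ {0, 1, …, p−1} be not all zero. Then there exist integers m ≥ 0 and d ≥ 1, depending only on p, l and the α_i, with the following property: for every commutative ring S, every ring endomorphism σ : S → S, and every unit g ∈ Sˣ satisfying g^p = 1 and ∏_{i=0}^{l} σ^i(g)^{α_i} = 1, one has σ^{m+d}(g) = σ^m(g). -/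
/-!
`ℤ[X]` acts on `Additive Sˣ` with `X` acting by `σ`, and the annihilator of `g` is an ideal
containing `p` and `a = ∑ αᵢ Xⁱ`. Since `a` is nonzero mod `p`, the ring `𝔽_p[X] ⧸ (a)` is finite,
so the powers of `X` in it are eventually periodic: `X ^ (m + d) ≡ X ^ m` modulo `(p, a)`, with
`m, d` depending only on `a`.
-/

open Polynomial

namespace Polynomial

theorem exists_dvd_X_pow_add_sub_X_pow {K : Type*} [Field K] [Finite K] {a : K[X]} (ha : a ≠ 0) :
    ∃ m d : ℕ, 0 < d ∧ a ∣ X ^ (m + d) - X ^ m := by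
  have := (AdjoinRoot.powerBasis ha).finite
  have : Finite (AdjoinRoot a) := Module.finite_of_finite K
  obtain ⟨i, j, hij, hpow⟩ :=
    Finite.exists_ne_map_eq_of_infinite fun n : ℕ => AdjoinRoot.root a ^ n
  have key : ∀ {i j : ℕ}, i < j → AdjoinRoot.root a ^ i = AdjoinRoot.root a ^ j →
      ∃ m d : ℕ, 0 < d ∧ a ∣ X ^ (m + d) - X ^ m := fun {i j} hlt h => by
    refine ⟨i, j - i, by omega, AdjoinRoot.mk_eq_mk.mp ?_⟩
    rw [Nat.add_sub_cancel' hlt.le, map_pow, map_pow, AdjoinRoot.mk_X, h]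
  rcases hij.lt_or_gt with hlt | hlt
  exacts [key hlt hpow, key hlt hpow.symm]

theorem exists_X_pow_add_sub_X_pow_mem_span {p : ℕ} [Fact p.Prime] {a : ℤ[X]}
    (ha : a.map (Int.castRingHom (ZMod p)) ≠ 0) :
    ∃ m d : ℕ, 0 < d ∧ X ^ (m + d) - X ^ m ∈ Ideal.span {a, C (p : ℤ)} := by
  obtain ⟨m, d, hd, q, hq⟩ := exists_dvd_X_pow_add_sub_X_pow ha
  obtain ⟨q, rfl⟩ := map_surjective _ (ZMod.ringHom_surjective (Int.castRingHom (ZMod p))) q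
  have hker :
      X ^ (m + d) - X ^ m - a * q ∈ RingHom.ker (mapRingHom (Int.castRingHom (ZMod p))) := by
    simp [RingHom.mem_ker, hq]
  rw [ker_mapRingHom, ZMod.ker_intCastRingHom, Ideal.map_span, Set.image_singleton,
    Ideal.mem_span_singleton] at hker
  obtain ⟨r, hr⟩ := hker
  exact ⟨m, d, hd, Ideal.mem_span_pair.mpr ⟨q, r, by rw [mul_comm r, ← hr]; ring⟩⟩

theorem aeval_apply_eq_zero_of_mem_span {R M : Type*} [CommRing R] [AddCommGroup M] [Module R M]
    {T : Module.End R M} {x : M} {a b f : R[X]} (ha : aeval T a x = 0) (hb : aeval T b x = 0)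
    (hf : f ∈ Ideal.span {a, b}) : aeval T f x = 0 := by
  obtain ⟨c, e, rfl⟩ := Ideal.mem_span_pair.mp hf
  simp [Module.End.mul_apply, ha, hb]

open Finset in
theorem map_sum_monomial_natCast_ne_zero {p l : ℕ} {α : ℕ → ℕ} (hαlt : ∀ i ≤ l, α i < p)
    (hαne : ∃ i ≤ l, α i ≠ 0) :
    (∑ i ∈ range (l + 1), monomial i (α i : ℤ)).map (Int.castRingHom (ZMod p)) ≠ 0 := by
  obtain ⟨i, hil, hi⟩ := hαne
  intro h
  have hcoeff := congrArg (coeff · i) h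
  simp only [coeff_map, finsetSum_coeff, coeff_monomial, sum_ite_eq', mem_range,
    Nat.lt_succ_of_le hil, if_true, coeff_zero, eq_intCast, Int.cast_natCast,
    ZMod.natCast_eq_zero_iff] at hcoeff
  exact hi (Nat.eq_zero_of_dvd_of_lt hcoeff (hαlt i hil))

end Polynomial

open Finset

theorem MonoidHom.toAdditive_toIntLinearMap_pow_apply {G : Type*} [CommGroup G] (φ : G →* G)
    (n : ℕ) (u : G) :
    (φ.toAdditive.toIntLinearMap ^ n) (Additive.ofMul u) = Additive.ofMul (φ^[n] u) := by
  rw [Module.End.pow_apply]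
  exact (Function.Semiconj.iterate_right (f := Additive.ofMul) (ga := φ)
    (gb := φ.toAdditive.toIntLinearMap) (fun _ => rfl) n u).symm

theorem CommGroup.exists_iterate_add_eq_iterate {p : ℕ} (hp : p.Prime) (l : ℕ) (α : ℕ → ℕ)
    (hαlt : ∀ i ≤ l, α i < p) (hαne : ∃ i ≤ l, α i ≠ 0) :
    ∃ m d : ℕ, 0 < d ∧ ∀ (G : Type*) [CommGroup G] (φ : G →* G) (u : G), u ^ p = 1 →
      ∏ i ∈ range (l + 1), φ^[i] u ^ α i = 1 → φ^[m + d] u = φ^[m] u := by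
  have : Fact p.Prime := ⟨hp⟩
  obtain ⟨m, d, hd, hmem⟩ :=
    exists_X_pow_add_sub_X_pow_mem_span (map_sum_monomial_natCast_ne_zero hαlt hαne)
  refine ⟨m, d, hd, fun G _ φ u hup hrel => ?_⟩
  set T := φ.toAdditive.toIntLinearMap
  have hT := φ.toAdditive_toIntLinearMap_pow_apply
  have hrelT : aeval T (∑ i ∈ range (l + 1), monomial i (α i : ℤ)) (Additive.ofMul u) = 0 := by
    simp [aeval_monomial, Module.End.mul_apply, T, hT, ← ofMul_pow, ← ofMul_prod, hrel]
  have htorsT : aeval T (C (p : ℤ)) (Additive.ofMul u) = 0 := by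
    simp [← ofMul_pow, hup]
  have h := aeval_apply_eq_zero_of_mem_span hrelT htorsT hmem
  rw [map_sub, aeval_X_pow, aeval_X_pow, LinearMap.sub_apply, sub_eq_zero, hT, hT] at h
  exact Additive.ofMul.injective h

/-- pointwise form of the structure of proper σ-closed subgroups of μ_p.
Given a prime `p` and exponents `α₀,…,α_l ∈ {0,…,p−1}` not all zero, there exist
`m ≥ 0` and `d ≥ 1`, depending only on `p`, `l` and the `αᵢ`, such that for every
commutative ring `S`, every ring endomorphism `σ` of `S`, and every unit `g ∈ S` with
`g^p = 1` and `∏_{i≤l} σ^i(g)^{αᵢ} = 1`, one has `σ^{m+d}(g) = σ^m(g)`. -/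
theorem stmt_19 (p : ℕ) (hp : Nat.Prime p) (l : ℕ) (α : ℕ → ℕ)
    (hαlt : ∀ i ≤ l, α i < p) (hαne : ∃ i ≤ l, α i ≠ 0) :
    ∃ (m d : ℕ), 1 ≤ d ∧
      ∀ (S : Type u) [CommRing S] (σ : S →+* S) (g : S),
        IsUnit g → g ^ p = 1 →
        (∏ i ∈ Finset.range (l + 1), (⇑σ)^[i] g ^ α i) = 1 →
        (⇑σ)^[m + d] g = (⇑σ)^[m] g := by
  obtain ⟨m, d, hd, h⟩ := CommGroup.exists_iterate_add_eq_iterate hp l α hαlt hαne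
  refine ⟨m, d, hd, fun S _ σ g hg hgp hrel => ?_⟩
  obtain ⟨w, rfl⟩ := hg
  have hcoe (n : ℕ) : ((Units.map (σ : S →* S))^[n] w : S) = σ^[n] w :=
    Function.Semiconj.iterate_right (fun v => Units.coe_map (σ : S →* S) v) n w
  have hwp : w ^ p = 1 := Units.ext (by simpa using hgp)
  have hwrel : ∏ i ∈ range (l + 1), (Units.map (σ : S →* S))^[i] w ^ α i = 1 :=
    Units.ext (by simpa [Units.coe_prod, hcoe] using hrel)
  simpa [hcoe] using congrArg Units.val (h Sˣ (Units.map σ) w hwp hwrel)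
end
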